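/- arXiv:1607.01530 — 7 statements merged into one kernel-verified Lean document; each statement's English description precedes it below -/
import Mathlib

section
/- Let p be an odd prime, let w ∈ (ℤ/pℤ)ˣ with w ∉ {1,−1}, set x = w + w⁻¹, and assume x ≠ 0. Set κ = x²/(x²−4) (note x² ≠ 4). Then the map t ↦ (t + κ/t, tw + κ/(tw)) from (ℤ/pℤ)ˣ to (ℤ/pℤ)² is injective and its image is exactly C(x) = {(y,z) ∈ (ℤ/pℤ)² : x² + y² + z² = xyz}; in particular |C(x)| = p − 1. Moreover, the rotation ρ : (y,z) ↦ (z, xz − y) maps C(x) to itself and corresponds under this parametrization to t ↦ tw, i.e. ρ(t + κ/t, tw + κ/(tw)) = (tw + κ/(tw), tw² + κ/(tw²)). -/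
private lemma cancel_factor {F : Type*} [Field F] {a b c : F} (hc : c ≠ 0)
    (h : (a - b) * c = 0) : a = b :=
  sub_eq_zero.mp ((mul_eq_zero.mp h).resolve_right hc)

theorem markoff_hyperbolic_section (p : ℕ) [hp : Fact p.Prime] (hodd : p ≠ 2)
    (w : ZMod p) (hw0 : w ≠ 0) (hw1 : w ≠ 1) (hw1' : w ≠ -1)
    (x : ZMod p) (hx : x = w + w⁻¹) (hxne : x ≠ 0)
    (κ : ZMod p) (hκ : κ = x ^ 2 / (x ^ 2 - 4)) :
    x ^ 2 ≠ 4 ∧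
    Set.InjOn (fun t : ZMod p => (t + κ / t, t * w + κ / (t * w)))
      {t : ZMod p | t ≠ 0} ∧
    (fun t : ZMod p => (t + κ / t, t * w + κ / (t * w))) '' {t : ZMod p | t ≠ 0} =
      {yz : ZMod p × ZMod p | x ^ 2 + yz.1 ^ 2 + yz.2 ^ 2 = x * yz.1 * yz.2} ∧
    {yz : ZMod p × ZMod p | x ^ 2 + yz.1 ^ 2 + yz.2 ^ 2 = x * yz.1 * yz.2}.ncard = p - 1 ∧
    Set.MapsTo (fun yz : ZMod p × ZMod p => (yz.2, x * yz.2 - yz.1))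
      {yz : ZMod p × ZMod p | x ^ 2 + yz.1 ^ 2 + yz.2 ^ 2 = x * yz.1 * yz.2}
      {yz : ZMod p × ZMod p | x ^ 2 + yz.1 ^ 2 + yz.2 ^ 2 = x * yz.1 * yz.2} ∧
    ∀ t : ZMod p, t ≠ 0 →
      (fun yz : ZMod p × ZMod p => (yz.2, x * yz.2 - yz.1)) (t + κ / t, t * w + κ / (t * w)) =
        (t * w + κ / (t * w), t * w ^ 2 + κ / (t * w ^ 2)) := by
  have hw2 : w ^ 2 - 1 ≠ 0 := by
    intro h
    have h2 : (w - 1) * (w + 1) = 0 := by linear_combination h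
    rcases mul_eq_zero.mp h2 with h' | h'
    · exact hw1 (sub_eq_zero.mp h')
    · exact hw1' (eq_neg_of_add_eq_zero_left h')
  have hxw : x * w = w ^ 2 + 1 := by
    rw [hx, add_mul, inv_mul_cancel₀ hw0]; ring
  have h4w : (x ^ 2 - 4) * w ^ 2 = (w ^ 2 - 1) ^ 2 := by
    linear_combination (x * w + w ^ 2 + 1) * hxw
  have hx4ne : x ^ 2 - 4 ≠ 0 := by
    intro h
    apply hw2
    have : (w ^ 2 - 1) ^ 2 = 0 := by rw [← h4w, h, zero_mul]
    exact pow_eq_zero_iff (n := 2) (by norm_num) |>.mp this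
  have part1 : x ^ 2 ≠ 4 := fun h => hx4ne (by rw [h]; ring)
  have hκx : κ * (x ^ 2 - 4) = x ^ 2 := by
    rw [hκ]; exact div_mul_cancel₀ _ hx4ne
  have hκw : κ * (w ^ 2 - 1) ^ 2 = (w ^ 2 + 1) ^ 2 := by
    linear_combination w ^ 2 * hκx + (1 - κ) * (x * w + w ^ 2 + 1) * hxw
  have hw21 : w ^ 2 + 1 ≠ 0 := by
    rw [← hxw]; exact mul_ne_zero hxne hw0
  have hκ0 : κ ≠ 0 := by
    intro h
    apply hw21
    have : (w ^ 2 + 1) ^ 2 = 0 := by rw [← hκw, h, zero_mul]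
    exact pow_eq_zero_iff (n := 2) (by norm_num) |>.mp this
  -- injectivity
  have hinj : Set.InjOn (fun t : ZMod p => (t + κ / t, t * w + κ / (t * w)))
      {t : ZMod p | t ≠ 0} := by
    intro t ht s hs h
    simp only [Set.mem_setOf_eq] at ht hs
    rw [Prod.mk.injEq] at h
    obtain ⟨h1, h2⟩ := h
    by_contra hne
    have htw : t * w ≠ 0 := mul_ne_zero ht hw0
    have hsw : s * w ≠ 0 := mul_ne_zero hs hw0
    have ha : κ / t * t = κ := div_mul_cancel₀ κ ht
    have hb : κ / s * s = κ := div_mul_cancel₀ κ hs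
    have haw : κ / (t * w) * (t * w) = κ := div_mul_cancel₀ κ htw
    have hbw : κ / (s * w) * (s * w) = κ := div_mul_cancel₀ κ hsw
    have key1 : (t - s) * (t * s - κ) = 0 := by
      linear_combination (t * s) * h1 - s * ha + t * hb
    have key2 : (t * w - s * w) * ((t * w) * (s * w) - κ) = 0 := by
      linear_combination ((t * w) * (s * w)) * h2 - (s * w) * haw + (t * w) * hbw
    have hts : t - s ≠ 0 := sub_ne_zero.mpr hne
    have e1 : t * s = κ :=
      sub_eq_zero.mp ((mul_eq_zero.mp key1).resolve_left hts)
    have e2 : (t * w) * (s * w) = κ := by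
      have : t * w - s * w ≠ 0 := by
        intro h'
        apply hts
        have h'' : (t - s) * w = 0 := by linear_combination h'
        exact (mul_eq_zero.mp h'').resolve_right hw0
      exact sub_eq_zero.mp ((mul_eq_zero.mp key2).resolve_left this)
    have : κ * (w ^ 2 - 1) = 0 := by linear_combination e2 - w ^ 2 * e1
    exact hw2 ((mul_eq_zero.mp this).resolve_left hκ0)
  -- image
  have himg : (fun t : ZMod p => (t + κ / t, t * w + κ / (t * w))) '' {t : ZMod p | t ≠ 0} =
      {yz : ZMod p × ZMod p | x ^ 2 + yz.1 ^ 2 + yz.2 ^ 2 = x * yz.1 * yz.2} := by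
    ext ⟨y, z⟩
    simp only [Set.mem_image, Set.mem_setOf_eq]
    constructor
    · rintro ⟨t, ht, heq⟩
      rw [Prod.mk.injEq] at heq
      obtain ⟨hy, hz⟩ := heq
      have htw : t * w ≠ 0 := mul_ne_zero ht hw0
      have hy' : y * t = t ^ 2 + κ := by
        rw [← hy, add_mul, div_mul_cancel₀ κ ht]; ring
      have hz' : z * (t * w) = t ^ 2 * w ^ 2 + κ := by
        rw [← hz, add_mul, div_mul_cancel₀ κ htw]; ring
      refine cancel_factor (c := t ^ 2 * w ^ 2)
        (mul_ne_zero (pow_ne_zero 2 ht) (pow_ne_zero 2 hw0)) ?_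
      linear_combination (y * w ^ 2 * t - z * x * w ^ 2 * t + κ * w ^ 2 + w ^ 2 * t ^ 2) * hy' +
        (z * w * t - x * κ * w - x * w * t ^ 2 + κ + w ^ 2 * t ^ 2) * hz' +
        (x * w * t ^ 2 - κ ^ 2 - κ * w ^ 2 * t ^ 2 - κ * t ^ 2 - w ^ 2 * t ^ 4 + w ^ 2 * t ^ 2 + t ^ 2) * hxw +
        (- t ^ 2) * hκw
    · intro hyz
      set t : ZMod p := (z * w - y) / (w ^ 2 - 1) with tdef
      have lin : t * (w ^ 2 - 1) = z * w - y := div_mul_cancel₀ _ hw2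
      have key2 : (z * w - y) * (y * (w ^ 2 - 1) - (z * w - y)) = (w ^ 2 + 1) ^ 2 := by
        linear_combination (-(w ^ 2)) * hyz + (-(y * z * w) + x * w + w ^ 2 + 1) * hxw
      have key : t * (y - t) = κ := by
        refine cancel_factor (c := (w ^ 2 - 1) ^ 2) (pow_ne_zero 2 hw2) ?_
        linear_combination key2 - hκw + (y * (w ^ 2 - 1) - (z * w - y) - t * (w ^ 2 - 1)) * lin
      have ht : t ≠ 0 := by
        intro h
        rw [h, zero_mul] at key
        exact hκ0 key.symm
      have htw : t * w ≠ 0 := mul_ne_zero ht hw0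
      refine ⟨t, ht, ?_⟩
      rw [Prod.mk.injEq]
      constructor
      · have hdiv : κ / t = y - t := by
          rw [div_eq_iff ht]; linear_combination -key
        rw [hdiv]; ring
      · have hdiv2 : κ / (t * w) = z - t * w := by
          rw [div_eq_iff htw]; linear_combination t * lin - key
        rw [hdiv2]; ring
  refine ⟨part1, hinj, himg, ?_, ?_, ?_⟩
  · rw [← himg, Set.ncard_image_of_injOn hinj]
    haveI : NeZero p := ⟨hp.out.ne_zero⟩
    have e : {t : ZMod p | t ≠ 0} = Set.univ \ {0} := by ext u; simp
    rw [e, Set.ncard_diff_singleton_of_mem (Set.mem_univ 0), Set.ncard_univ,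
      Nat.card_eq_fintype_card, ZMod.card]
  · rintro ⟨y, z⟩ hyz
    simp only [Set.mem_setOf_eq] at hyz ⊢
    linear_combination hyz
  · intro t ht
    simp only
    rw [Prod.mk.injEq]
    refine ⟨rfl, ?_⟩
    have htw : t * w ≠ 0 := mul_ne_zero ht hw0
    have htw2 : t * w ^ 2 ≠ 0 := mul_ne_zero ht (pow_ne_zero 2 hw0)
    have ha : κ / t * t = κ := div_mul_cancel₀ κ ht
    have hb : κ / (t * w) * (t * w) = κ := div_mul_cancel₀ κ htw
    have hc : κ / (t * w ^ 2) * (t * w ^ 2) = κ := div_mul_cancel₀ κ htw2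
    refine cancel_factor (c := t * w ^ 2) htw2 ?_
    linear_combination (-(w ^ 2)) * ha + (x * w) * hb + (-1 : ZMod p) * hc +
      (κ + w ^ 2 * t ^ 2) * hxw
end

section
/- Let p be an odd prime, let F be the field with p² elements containing ℤ/pℤ, and let v ∈ F satisfy v^{p+1} = 1 and v^p ≠ v (so v ∉ ℤ/pℤ). Set x = v + v^p ∈ ℤ/pℤ and assume x ≠ 0; then x² ≠ 4, and set κ = x²/(x²−4) ∈ ℤ/pℤ. Then the map t ↦ (t + κ/t, tv + κ/(tv)) is an injection of E = {t ∈ F : t^{p+1} = κ} into (ℤ/pℤ)² whose image is exactly C(x) = {(y,z) ∈ (ℤ/pℤ)² : x² + y² + z² = xyz}; in particular |C(x)| = p + 1. Moreover the rotation (y,z) ↦ (z, xz − y) maps C(x) to itself and corresponds under this parametrization to t ↦ tv. -/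
/-!
For `t ^ (p + 1) = κ` the Galois conjugate of `t` is `t ^ p = κ / t`, so `y = t + κ / t` and
`z = t v + κ / (t v)` are the traces of `t` and `t v`, and lie in `𝔽_p`. Writing
`x = v + v⁻¹`, the Markoff equation for `(x, y, z)` reduces to `κ (v - v⁻¹)² = x²`, which is the
definition of `κ`. Conversely, a point `(y, z)` of `C(x)` determines `(t, κ / t)` as the solution
of the linear system `t + s = y`, `t v + s v⁻¹ = z`; uniqueness of that solution forces
`s = t ^ p`, and the Markoff equation gives `t s = κ`. Injectivity holds because `t + κ / t`
determines `t` up to `t ↦ κ / t`, which the second coordinate rules out as `v² ≠ 1`. Finally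
`t ↦ t ^ (p + 1)` is the norm `𝔽_{p²}ˣ → 𝔽_pˣ`, which is surjective, and `𝔽_{p²}` contains all
`(p + 1)`-th roots of unity, so each fibre has `p + 1` elements.
-/

def markoffConic {R : Type*} [CommRing R] (x : R) : Set (R × R) :=
  {yz | x ^ 2 + yz.1 ^ 2 + yz.2 ^ 2 = x * yz.1 * yz.2}

def conicParam {K : Type*} [Field K] (κ v t : K) : K × K :=
  (t + κ / t, t * v + κ / (t * v))

theorem pow_eq_inv_of_pow_succ_eq_one {G₀ : Type*} [GroupWithZero G₀] {v : G₀} {n : ℕ}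
    (h : v ^ (n + 1) = 1) : v ^ n = v⁻¹ :=
  eq_inv_of_mul_eq_one_left (by rwa [← pow_succ])

theorem ne_zero_of_ne_inv {G₀ : Type*} [GroupWithZero G₀] {v : G₀} (h : v ≠ v⁻¹) : v ≠ 0 := by
  rintro rfl
  exact h inv_zero.symm

theorem ne_zero_of_pow_succ_eq {M₀ : Type*} [MonoidWithZero M₀] {t a : M₀} {n : ℕ}
    (ha : a ≠ 0) (h : t ^ (n + 1) = a) : t ≠ 0 := by
  rintro rfl
  exact ha (by simpa using h.symm)

theorem div_eq_pow_of_pow_succ_eq {G₀ : Type*} [GroupWithZero G₀] {t a : G₀} {n : ℕ}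
    (ha : a ≠ 0) (h : t ^ (n + 1) = a) : a / t = t ^ n := by
  rw [div_eq_iff (ne_zero_of_pow_succ_eq ha h), ← pow_succ, h]

theorem mk_add_mem_markoffConic {R : Type*} [CommRing R] {κ v w t s : R} (hvw : v * w = 1)
    (hκ : κ * (v - w) ^ 2 = (v + w) ^ 2) (hts : t * s = κ) :
    (t + s, t * v + s * w) ∈ markoffConic (v + w) := by
  show (v + w) ^ 2 + (t + s) ^ 2 + (t * v + s * w) ^ 2 = (v + w) * (t + s) * (t * v + s * w)
  linear_combination -(t + s) ^ 2 * hvw - hκ - (v - w) ^ 2 * hts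

theorem markoffConic_mapsTo_rotate {R : Type*} [CommRing R] (x : R) :
    Set.MapsTo (fun yz : R × R ↦ (yz.2, x * yz.2 - yz.1)) (markoffConic x) (markoffConic x) :=
  fun yz (h : x ^ 2 + yz.1 ^ 2 + yz.2 ^ 2 = x * yz.1 * yz.2) ↦
    show x ^ 2 + yz.2 ^ 2 + (x * yz.2 - yz.1) ^ 2 = x * yz.2 * (x * yz.2 - yz.1) by
      linear_combination h

theorem map_mem_markoffConic_iff {R S : Type*} [CommRing R] [CommRing S] {f : R →+* S}
    (hf : Function.Injective f) {x : R} {yz : R × R} :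
    Prod.map f f yz ∈ markoffConic (f x) ↔ yz ∈ markoffConic x := by
  simp only [markoffConic, Set.mem_ofPred_eq, Prod.map, ← map_pow, ← map_add, ← map_mul,
    hf.eq_iff]

section Field

variable {K : Type*} [Field K]

theorem eq_or_mul_eq_of_add_div_eq {a b k : K} (ha : a ≠ 0) (hb : b ≠ 0)
    (h : a + k / a = b + k / b) : a = b ∨ a * b = k := by
  have : (a - b) * (a * b - k) = 0 := by
    field_simp at h
    linear_combination h
  rcases mul_eq_zero.mp this with h | h
  · exact .inl (sub_eq_zero.mp h)
  · exact .inr (sub_eq_zero.mp h)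

theorem conicParam_injOn {κ v : K} (hvv : v ≠ v⁻¹) :
    Set.InjOn (conicParam κ v) {t | t ≠ 0} := by
  have hv0 := ne_zero_of_ne_inv hvv
  intro t ht s hs hts
  simp only [conicParam, Prod.mk.injEq] at hts
  rcases eq_or_mul_eq_of_add_div_eq ht hs hts.1 with h | hts₁
  · exact h
  rcases eq_or_mul_eq_of_add_div_eq (mul_ne_zero ht hv0) (mul_ne_zero hs hv0) hts.2 with h | hts₂
  · exact mul_right_cancel₀ hv0 h
  refine absurd (eq_inv_of_mul_eq_one_left (mul_left_cancel₀ (mul_ne_zero ht hs) ?_)) hvv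
  linear_combination hts₂ - hts₁

theorem conicParam_rotate {κ v : K} (hv0 : v ≠ 0) (t : K) :
    ((conicParam κ v t).2, (v + v⁻¹) * (conicParam κ v t).2 - (conicParam κ v t).1) =
      conicParam κ v (t * v) := by
  rcases eq_or_ne t 0 with rfl | ht
  · simp [conicParam]
  simp only [conicParam, Prod.mk.injEq, true_and]
  field_simp
  ring

theorem eq_of_add_eq_add_of_mul_add_mul_eq {a b a' b' v w : K} (hvw : v ≠ w)
    (h₁ : a + b = a' + b') (h₂ : a * v + b * w = a' * v + b' * w) : b = b' := by
  have : (b - b') * (w - v) = 0 := by linear_combination h₂ - v * h₁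
  exact sub_eq_zero.mp ((mul_eq_zero.mp this).resolve_right (sub_ne_zero.mpr hvw.symm))

end Field

theorem algebraMap_sq_sub_four {R K : Type*} [CommRing R] [Field K] [Algebra R K] {x : R} {v : K}
    (hv0 : v ≠ 0) (hx : algebraMap R K x = v + v⁻¹) :
    algebraMap R K (x ^ 2 - 4) = (v - v⁻¹) ^ 2 := by
  rw [map_sub, map_pow, hx, map_ofNat]
  linear_combination 4 * mul_inv_cancel₀ hv0

theorem exists_isPrimitiveRoot_of_dvd_card_sub_one {K : Type*} [Field K] [Finite K] {n : ℕ}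
    (hn : n ∣ Nat.card K - 1) : ∃ ζ : K, IsPrimitiveRoot ζ n := by
  classical
  have := Fintype.ofFinite Kˣ
  have hcard : n ∣ Fintype.card Kˣ := by rwa [← Nat.card_eq_fintype_card, Nat.card_units]
  have hpos : 0 < n := Nat.pos_of_dvd_of_pos hn (Nat.sub_pos_of_lt Finite.one_lt_card)
  obtain ⟨ζ, hζ⟩ : ∃ ζ : Kˣ, orderOf ζ = n := by
    have := IsCyclic.card_orderOf_eq_totient hcard
    obtain ⟨ζ, hζ⟩ := Finset.card_pos.mp (this ▸ Nat.totient_pos.mpr hpos)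
    exact ⟨ζ, (Finset.mem_filter.mp hζ).2⟩
  exact ⟨ζ, by simpa [orderOf_units, hζ] using IsPrimitiveRoot.orderOf (ζ : K)⟩

theorem ncard_setOf_pow_eq {R : Type*} [CommRing R] [IsDomain R] {n : ℕ} {ζ a : R}
    (hn : 0 < n) (hζ : IsPrimitiveRoot ζ n) (ha : a ≠ 0) (h : ∃ α, α ^ n = a) :
    {t : R | t ^ n = a}.ncard = n := by
  classical
  have : {t : R | t ^ n = a} = Polynomial.nthRootsFinset n a := by
    ext t; simp [Polynomial.mem_nthRootsFinset hn]
  rw [this, Set.ncard_coe_finset, Polynomial.nthRootsFinset, Multiset.toFinset_card_of_nodup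
    (hζ.nthRoots_nodup ha), hζ.card_nthRoots, if_pos h]

section QuadraticExtension

variable {p : ℕ} [hp : Fact p.Prime] {F : Type*} [Field F] [Algebra (ZMod p) F]

theorem algebraMap_zmod_pow_char (c : ZMod p) :
    algebraMap (ZMod p) F c ^ p = algebraMap (ZMod p) F c := by
  rw [← map_pow, ZMod.pow_card]

theorem finrank_eq_two_of_natCard_eq_sq [Finite F] (hcard : Nat.card F = p ^ 2) :
    Module.finrank (ZMod p) F = 2 := by
  have := Module.natCard_eq_pow_finrank (K := ZMod p) (V := F)
  rw [hcard, Nat.card_zmod] at this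
  exact (Nat.pow_right_injective hp.out.two_le this).symm

theorem algebraMap_trace_eq_add_pow [Finite F] (hcard : Nat.card F = p ^ 2) (t : F) :
    algebraMap (ZMod p) F (Algebra.trace (ZMod p) F t) = t + t ^ p := by
  simp [FiniteField.algebraMap_trace_eq_sum_pow, finrank_eq_two_of_natCard_eq_sq hcard,
    Finset.sum_range_succ]

theorem algebraMap_norm_eq_pow_succ [Finite F] (hcard : Nat.card F = p ^ 2) (t : F) :
    algebraMap (ZMod p) F (Algebra.norm (ZMod p) t) = t ^ (p + 1) := by
  simp [FiniteField.algebraMap_norm_eq_prod_pow, finrank_eq_two_of_natCard_eq_sq hcard,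
    Finset.prod_range_succ, pow_succ']

theorem conicParam_mem_image [Finite F] (hcard : Nat.card F = p ^ 2) {v : F}
    (hv : v ^ p = v⁻¹) (hv0 : v ≠ 0) {x κ : ZMod p}
    (hx : algebraMap (ZMod p) F x = v + v⁻¹)
    (hκ : algebraMap (ZMod p) F κ * (v - v⁻¹) ^ 2 = (v + v⁻¹) ^ 2)
    (hκ0 : algebraMap (ZMod p) F κ ≠ 0) {t : F} (ht : t ^ (p + 1) = algebraMap (ZMod p) F κ) :
    conicParam (algebraMap (ZMod p) F κ) v t ∈
      Prod.map (algebraMap (ZMod p) F) (algebraMap (ZMod p) F) '' markoffConic x := by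
  have htv : (t * v) ^ (p + 1) = algebraMap (ZMod p) F κ := by
    rw [mul_pow, ht, pow_succ, hv, inv_mul_cancel₀ hv0, mul_one]
  have hparam : conicParam (algebraMap (ZMod p) F κ) v t = (t + t ^ p, t * v + t ^ p * v⁻¹) := by
    rw [conicParam, div_eq_pow_of_pow_succ_eq hκ0 ht, div_eq_pow_of_pow_succ_eq hκ0 htv,
      mul_pow, hv]
  have htrace : Prod.map (algebraMap (ZMod p) F) (algebraMap (ZMod p) F)
      (Algebra.trace (ZMod p) F t, Algebra.trace (ZMod p) F (t * v)) =
        (t + t ^ p, t * v + t ^ p * v⁻¹) := by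
    simp only [Prod.map, algebraMap_trace_eq_add_pow hcard, mul_pow, hv]
  refine ⟨_, ?_, htrace.trans hparam.symm⟩
  rw [← map_mem_markoffConic_iff (algebraMap (ZMod p) F).injective, htrace, hx]
  exact mk_add_mem_markoffConic (mul_inv_cancel₀ hv0) hκ (by rw [← pow_succ']; exact ht)

theorem exists_conicParam_eq {v : F} (hv : v ^ p = v⁻¹) (hvv : v ≠ v⁻¹)
    {x κ : ZMod p} (hx : algebraMap (ZMod p) F x = v + v⁻¹)
    (hκ : algebraMap (ZMod p) F κ * (v - v⁻¹) ^ 2 = (v + v⁻¹) ^ 2)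
    (hκ0 : algebraMap (ZMod p) F κ ≠ 0) {yz : ZMod p × ZMod p} (hyz : yz ∈ markoffConic x) :
    ∃ t : F, t ^ (p + 1) = algebraMap (ZMod p) F κ ∧
      conicParam (algebraMap (ZMod p) F κ) v t =
        Prod.map (algebraMap (ZMod p) F) (algebraMap (ZMod p) F) yz := by
  have : CharP F p := (Algebra.charP_iff (ZMod p) F p).mp inferInstance
  have hv0 := ne_zero_of_ne_inv hvv
  have hne := sub_ne_zero.mpr hvv
  obtain ⟨y, z⟩ := yz
  rw [← map_mem_markoffConic_iff (algebraMap (ZMod p) F).injective, hx] at hyz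
  simp only [Prod.map, markoffConic, Set.mem_ofPred_eq] at hyz ⊢
  have hyp := algebraMap_zmod_pow_char (F := F) y
  have hzp := algebraMap_zmod_pow_char (F := F) z
  generalize algebraMap (ZMod p) F y = c at hyz hyp ⊢
  generalize algebraMap (ZMod p) F z = d at hyz hzp ⊢
  obtain ⟨t, ht⟩ : ∃ t, t * (v - v⁻¹) = d - c * v⁻¹ := ⟨_, div_mul_cancel₀ _ hne⟩
  obtain ⟨s, hsum⟩ : ∃ s, t + s = c := ⟨_, add_sub_cancel t c⟩
  have hs : s * (v - v⁻¹) = c * v - d := by linear_combination (v - v⁻¹) * hsum - ht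
  have hsum' : t * v + s * v⁻¹ = d := by linear_combination ht + v⁻¹ * hsum
  have hts : t * s = algebraMap (ZMod p) F κ := by
    refine mul_right_cancel₀ (pow_ne_zero 2 hne) ?_
    linear_combination s * (v - v⁻¹) * ht + (d - c * v⁻¹) * hs - c ^ 2 * mul_inv_cancel₀ hv0
      - hyz - hκ
  -- Frobenius fixes `c`, `d` and swaps `v`, `v⁻¹`, so `(s ^ p, t ^ p)` solves the same system.
  have hfrob : t ^ p = s := by
    have hc : s ^ p + t ^ p = t + s := by
      rw [hsum, ← hyp, ← hsum, add_pow_char, add_comm]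
    have hd : s ^ p * v + t ^ p * v⁻¹ = t * v + s * v⁻¹ := by
      rw [hsum', ← hzp, ← hsum', add_pow_char, mul_pow, mul_pow, hv, inv_pow, hv, inv_inv,
        add_comm]
    exact eq_of_add_eq_add_of_mul_add_mul_eq hvv hc hd
  have ht0 : t ≠ 0 := left_ne_zero_of_mul (hts ▸ hκ0)
  refine ⟨t, by rw [pow_succ, hfrob, mul_comm, hts], ?_⟩
  rw [conicParam, ← hts, mul_div_cancel_left₀ _ ht0, hsum, mul_div_mul_left _ _ ht0,
    div_eq_mul_inv, hsum']

theorem ncard_setOf_pow_succ_eq [Finite F] (hcard : Nat.card F = p ^ 2) {κ : ZMod p}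
    (hκ0 : algebraMap (ZMod p) F κ ≠ 0) :
    {t : F | t ^ (p + 1) = algebraMap (ZMod p) F κ}.ncard = p + 1 := by
  have hdvd : p + 1 ∣ Nat.card F - 1 := ⟨p - 1, by rw [hcard, ← Nat.sq_sub_sq p 1, one_pow]⟩
  obtain ⟨ζ, hζ⟩ := exists_isPrimitiveRoot_of_dvd_card_sub_one hdvd
  obtain ⟨t₀, ht₀⟩ := FiniteField.norm_surjective (ZMod p) F κ
  exact ncard_setOf_pow_eq p.succ_pos hζ hκ0
    ⟨t₀, by rw [← algebraMap_norm_eq_pow_succ hcard, ht₀]⟩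

theorem conicParam_image_eq [Finite F] (hcard : Nat.card F = p ^ 2) {v : F}
    (hv : v ^ p = v⁻¹) (hvv : v ≠ v⁻¹) {x κ : ZMod p}
    (hx : algebraMap (ZMod p) F x = v + v⁻¹)
    (hκ : algebraMap (ZMod p) F κ * (v - v⁻¹) ^ 2 = (v + v⁻¹) ^ 2)
    (hκ0 : algebraMap (ZMod p) F κ ≠ 0) :
    conicParam (algebraMap (ZMod p) F κ) v '' {t | t ^ (p + 1) = algebraMap (ZMod p) F κ} =
      Prod.map (algebraMap (ZMod p) F) (algebraMap (ZMod p) F) '' markoffConic x := by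
  refine Set.Subset.antisymm (Set.image_subset_iff.mpr fun t ht ↦
    conicParam_mem_image hcard hv (ne_zero_of_ne_inv hvv) hx hκ hκ0 ht) ?_
  rintro _ ⟨yz, hyz, rfl⟩
  exact exists_conicParam_eq hv hvv hx hκ hκ0 hyz

end QuadraticExtension

theorem markoff_elliptic_section_general (p : ℕ) [hp : Fact p.Prime]
    (F : Type) [Field F] [Algebra (ZMod p) F] (hcard : Nat.card F = p ^ 2)
    (v : F) (hv : v ^ (p + 1) = 1) (hv' : v ^ p ≠ v)
    (x : ZMod p) (hx : algebraMap (ZMod p) F x = v + v ^ p) (hxne : x ≠ 0)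
    (κ : ZMod p) (hκ : κ = x ^ 2 / (x ^ 2 - 4)) :
    x ^ 2 ≠ 4 ∧
    Set.InjOn
      (fun t : F => (t + algebraMap (ZMod p) F κ / t,
        t * v + algebraMap (ZMod p) F κ / (t * v)))
      {t : F | t ^ (p + 1) = algebraMap (ZMod p) F κ} ∧
    (fun t : F => (t + algebraMap (ZMod p) F κ / t,
        t * v + algebraMap (ZMod p) F κ / (t * v))) ''
        {t : F | t ^ (p + 1) = algebraMap (ZMod p) F κ} =
      (fun yz : ZMod p × ZMod p => (algebraMap (ZMod p) F yz.1, algebraMap (ZMod p) F yz.2)) ''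
        {yz : ZMod p × ZMod p | x ^ 2 + yz.1 ^ 2 + yz.2 ^ 2 = x * yz.1 * yz.2} ∧
    {yz : ZMod p × ZMod p | x ^ 2 + yz.1 ^ 2 + yz.2 ^ 2 = x * yz.1 * yz.2}.ncard = p + 1 ∧
    Set.MapsTo (fun yz : ZMod p × ZMod p => (yz.2, x * yz.2 - yz.1))
      {yz : ZMod p × ZMod p | x ^ 2 + yz.1 ^ 2 + yz.2 ^ 2 = x * yz.1 * yz.2}
      {yz : ZMod p × ZMod p | x ^ 2 + yz.1 ^ 2 + yz.2 ^ 2 = x * yz.1 * yz.2} ∧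
    ∀ t : F, t ^ (p + 1) = algebraMap (ZMod p) F κ →
      ((t * v + algebraMap (ZMod p) F κ / (t * v)),
        algebraMap (ZMod p) F x * (t * v + algebraMap (ZMod p) F κ / (t * v)) -
          (t + algebraMap (ZMod p) F κ / t)) =
      (t * v + algebraMap (ZMod p) F κ / (t * v),
        (t * v) * v + algebraMap (ZMod p) F κ / ((t * v) * v)) := by
  have : Finite F := Nat.finite_of_card_ne_zero (by simp [hcard, hp.out.ne_zero])
  have hvp : v ^ p = v⁻¹ := pow_eq_inv_of_pow_succ_eq_one hv
  have hvv : v ≠ v⁻¹ := fun h ↦ hv' (hvp.trans h.symm)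
  rw [hvp] at hx
  have hx4 := algebraMap_sq_sub_four (ne_zero_of_ne_inv hvv) hx
  have hx4' : x ^ 2 - 4 ≠ 0 := fun h ↦ sub_ne_zero.mpr hvv <|
    pow_eq_zero_iff two_ne_zero |>.mp (by rw [← hx4, h, map_zero])
  have hκx : algebraMap (ZMod p) F κ * (v - v⁻¹) ^ 2 = (v + v⁻¹) ^ 2 := by
    rw [← hx4, ← hx, ← map_pow, ← map_mul, hκ, div_mul_cancel₀ _ hx4']
  have hκ0 : algebraMap (ZMod p) F κ ≠ 0 :=
    (map_ne_zero _).mpr (hκ ▸ div_ne_zero (pow_ne_zero 2 hxne) hx4')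
  have hinj : Set.InjOn (conicParam (algebraMap (ZMod p) F κ) v)
      {t | t ^ (p + 1) = algebraMap (ZMod p) F κ} :=
    (conicParam_injOn hvv).mono fun _ ↦ ne_zero_of_pow_succ_eq hκ0
  have himage := conicParam_image_eq hcard hvp hvv hx hκx hκ0
  refine ⟨sub_ne_zero.mp hx4', hinj, himage, ?_, markoffConic_mapsTo_rotate x, fun t _ ↦ ?_⟩
  · show (markoffConic x).ncard = p + 1
    have hι := (algebraMap (ZMod p) F).injective
    rw [← Set.ncard_image_of_injective _ (hι.prodMap hι), ← himage,
      hinj.ncard_image, ncard_setOf_pow_succ_eq hcard hκ0]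
  · rw [hx]
    exact conicParam_rotate (ne_zero_of_ne_inv hvv) t

theorem markoff_elliptic_section (p : ℕ) [hp : Fact p.Prime] (hodd : p ≠ 2)
    (F : Type) [Field F] [Algebra (ZMod p) F] (hcard : Nat.card F = p ^ 2)
    (v : F) (hv : v ^ (p + 1) = 1) (hv' : v ^ p ≠ v)
    (x : ZMod p) (hx : algebraMap (ZMod p) F x = v + v ^ p) (hxne : x ≠ 0)
    (κ : ZMod p) (hκ : κ = x ^ 2 / (x ^ 2 - 4)) :
    x ^ 2 ≠ 4 ∧
    Set.InjOn
      (fun t : F => (t + algebraMap (ZMod p) F κ / t,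
        t * v + algebraMap (ZMod p) F κ / (t * v)))
      {t : F | t ^ (p + 1) = algebraMap (ZMod p) F κ} ∧
    (fun t : F => (t + algebraMap (ZMod p) F κ / t,
        t * v + algebraMap (ZMod p) F κ / (t * v))) ''
        {t : F | t ^ (p + 1) = algebraMap (ZMod p) F κ} =
      (fun yz : ZMod p × ZMod p => (algebraMap (ZMod p) F yz.1, algebraMap (ZMod p) F yz.2)) ''
        {yz : ZMod p × ZMod p | x ^ 2 + yz.1 ^ 2 + yz.2 ^ 2 = x * yz.1 * yz.2} ∧
    {yz : ZMod p × ZMod p | x ^ 2 + yz.1 ^ 2 + yz.2 ^ 2 = x * yz.1 * yz.2}.ncard = p + 1 ∧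
    Set.MapsTo (fun yz : ZMod p × ZMod p => (yz.2, x * yz.2 - yz.1))
      {yz : ZMod p × ZMod p | x ^ 2 + yz.1 ^ 2 + yz.2 ^ 2 = x * yz.1 * yz.2}
      {yz : ZMod p × ZMod p | x ^ 2 + yz.1 ^ 2 + yz.2 ^ 2 = x * yz.1 * yz.2} ∧
    ∀ t : F, t ^ (p + 1) = algebraMap (ZMod p) F κ →
      ((t * v + algebraMap (ZMod p) F κ / (t * v)),
        algebraMap (ZMod p) F x * (t * v + algebraMap (ZMod p) F κ / (t * v)) -
          (t + algebraMap (ZMod p) F κ / t)) =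
      (t * v + algebraMap (ZMod p) F κ / (t * v),
        (t * v) * v + algebraMap (ZMod p) F κ / ((t * v) * v)) :=
  markoff_elliptic_section_general p (hp := hp) F hcard v hv hv' x hx hxne κ hκ
end

section
/- There exists P₀ such that for every prime p ≥ P₀ and all ξ₁, ξ₂ ∈ ℤ/pℤ with ξ₁ ≠ 0, ξ₂ ≠ 0, 9ξ₁² ≠ 4 and 9ξ₂² ≠ 4, there exists y ∈ ℤ/pℤ such that both equations ξ₁² + y² + z² = 3ξ₁yz and ξ₂² + y² + z² = 3ξ₂yz have a solution z ∈ ℤ/pℤ. (Equivalently, in the incidence graph whose vertices are the conic sections C_j(ξ) on the Markoff surface mod p and whose edges are their points of intersection, any two vertices are at distance at most 2, so the incidence graph is connected of diameter 2.) -/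
/-!
The sections `C₁(ξ)` and `C₃(y)` meet iff `z ^ 2 - 3ξyz + ξ ^ 2 + y ^ 2` has a root `z`, i.e. iff
its discriminant `(9ξ ^ 2 - 4) y ^ 2 - (2ξ) ^ 2` is a square. With `χ` the quadratic character of
`𝔽_q`, the Jacobi sum `J(χ, χ) = -χ(-1)` gives `∑ y, χ(a y ^ 2 + c) = -χ(a)` for `a, c ≠ 0`, and
from this one counts exactly `(q + 1) / 2` admissible `y` when `ξ ≠ 0` and `9ξ ^ 2 ≠ 4`. Two
subsets of `𝔽_q` of that size must intersect.
-/

open Finset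

section QuadraticCharSums

variable {F : Type*} [Field F] [Fintype F] [DecidableEq F]

theorem quadraticChar_sum_mul_add (hF : ringChar F ≠ 2) {b : F} (hb : b ≠ 0) :
    ∑ x : F, quadraticChar F x * quadraticChar F (x + b) = -1 := by
  have hJ : jacobiSum (quadraticChar F) (quadraticChar F) = -quadraticChar F (-1) := by
    simpa only [(quadraticChar_isQuadratic F).inv] using
      jacobiSum_nontrivial_inv (quadraticChar_ne_one hF)
  rw [← Equiv.sum_comp (Equiv.mulLeft₀ (-b) (neg_ne_zero.mpr hb))]
  calc ∑ t : F, quadraticChar F (-b * t) * quadraticChar F (-b * t + b)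
      = quadraticChar F (-1 * b ^ 2) * jacobiSum (quadraticChar F) (quadraticChar F) := by
        rw [jacobiSum, mul_sum]
        refine sum_congr rfl fun t _ => ?_
        rw [show -b * t + b = b * (1 - t) by ring, ← map_mul, ← map_mul, ← map_mul]
        ring_nf
    _ = -1 := by
        rw [hJ, map_mul, quadraticChar_sq_one' hb, mul_one, mul_neg, ← sq,
          quadraticChar_sq_one (neg_ne_zero.mpr one_ne_zero)]

theorem card_filter_sq_eq_quadraticChar (hF : ringChar F ≠ 2) (t : F) :
    (#{y : F | y ^ 2 = t} : ℤ) = quadraticChar F t + 1 := by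
  rw [← quadraticChar_card_sqrts hF t, Set.toFinset_ofPred]

theorem quadraticChar_sum_sq_add (hF : ringChar F ≠ 2) {b : F} (hb : b ≠ 0) :
    ∑ y : F, quadraticChar F (y ^ 2 + b) = -1 := by
  calc ∑ y : F, quadraticChar F (y ^ 2 + b)
      = ∑ t : F, ∑ y ∈ {y : F | y ^ 2 = t}, quadraticChar F (t + b) := by
        rw [← sum_fiberwise univ (fun y : F => y ^ 2)]
        exact sum_congr rfl fun t _ => sum_congr rfl fun y hy => by rw [(mem_filter.mp hy).2]
    _ = ∑ t : F, (quadraticChar F t * quadraticChar F (t + b) + quadraticChar F (t + b)) := by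
        refine sum_congr rfl fun t _ => ?_
        rw [sum_const, nsmul_eq_mul, card_filter_sq_eq_quadraticChar hF]
        ring
    _ = -1 := by
        rw [sum_add_distrib, quadraticChar_sum_mul_add hF hb,
          Fintype.sum_equiv (Equiv.addRight b) (fun x => quadraticChar F (x + b)) _ fun _ => rfl,
          quadraticChar_sum_zero hF, add_zero]

theorem quadraticChar_sum_mul_sq_add (hF : ringChar F ≠ 2) {a c : F} (ha : a ≠ 0) (hc : c ≠ 0) :
    ∑ y : F, quadraticChar F (a * y ^ 2 + c) = -quadraticChar F a := by
  have hfactor : ∀ y : F, a * y ^ 2 + c = a * (y ^ 2 + c / a) := fun y => by field_simp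
  simp_rw [hfactor, map_mul, ← mul_sum, quadraticChar_sum_sq_add hF (div_ne_zero hc ha),
    mul_neg_one]

theorem two_mul_ite_isSquare (v : F) :
    2 * (if IsSquare v then 1 else 0 : ℤ) = quadraticChar F v + 1 + if v = 0 then 1 else 0 := by
  by_cases h0 : v = 0
  · simp [h0]
  by_cases hv : IsSquare v
  · rw [if_pos hv, if_neg h0, (quadraticChar_one_iff_isSquare h0).mpr hv]; norm_num
  · rw [if_neg hv, if_neg h0, quadraticChar_neg_one_iff_not_isSquare.mpr hv]; norm_num

theorem two_mul_card_filter_isSquare_mul_sq_sub_sq (hF : ringChar F ≠ 2)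
    {a d : F} (ha : a ≠ 0) (hd : d ≠ 0) :
    2 * #{y : F | IsSquare (a * y ^ 2 - d ^ 2)} = Fintype.card F + 1 := by
  have hroots : ∀ y : F, a * y ^ 2 - d ^ 2 = 0 ↔ y ^ 2 = d ^ 2 / a := fun y => by
    rw [sub_eq_zero, eq_div_iff ha, mul_comm]
  have hzeros : (#{y : F | a * y ^ 2 - d ^ 2 = 0} : ℤ) = quadraticChar F a + 1 := by
    simp_rw [hroots, card_filter_sq_eq_quadraticChar hF, div_eq_mul_inv, map_mul,
      quadraticChar_sq_one' hd, one_mul, ← MulChar.inv_apply', (quadraticChar_isQuadratic F).inv]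
  have hsum : ∑ y : F, quadraticChar F (a * y ^ 2 - d ^ 2) = -quadraticChar F a := by
    simpa only [← sub_eq_add_neg] using
      quadraticChar_sum_mul_sq_add hF ha (neg_ne_zero.mpr (pow_ne_zero 2 hd))
  zify
  rw [card_filter, Nat.cast_sum, mul_sum]
  simp_rw [Nat.cast_ite, Nat.cast_one, Nat.cast_zero, two_mul_ite_isSquare]
  rw [sum_add_distrib, sum_add_distrib, hsum, sum_boole, hzeros]
  simp only [sum_const, card_univ, nsmul_eq_mul, mul_one]
  ring

end QuadraticCharSums

/-- The discriminant of `z ^ 2 - 3 ξ y z + (ξ ^ 2 + y ^ 2)` as a polynomial in `z`. -/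
def markoffDiscrim {R : Type*} [CommRing R] (ξ y : R) : R :=
  (9 * ξ ^ 2 - 4) * y ^ 2 - (2 * ξ) ^ 2

theorem exists_markoff_of_isSquare_markoffDiscrim {K : Type*} [Field K] [NeZero (2 : K)]
    {ξ y : K} (h : IsSquare (markoffDiscrim ξ y)) :
    ∃ z : K, ξ ^ 2 + y ^ 2 + z ^ 2 = 3 * ξ * y * z := by
  obtain ⟨s, hs⟩ := h
  obtain ⟨z, hz⟩ := exists_quadratic_eq_zero (a := 1) (b := -(3 * ξ * y)) (c := ξ ^ 2 + y ^ 2)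
    one_ne_zero ⟨s, by rw [discrim, ← hs, markoffDiscrim]; ring⟩
  exact ⟨z, by linear_combination hz⟩

theorem two_mul_card_filter_isSquare_markoffDiscrim {F : Type*} [Field F] [Fintype F]
    [DecidableEq F] (hF : ringChar F ≠ 2) {ξ : F} (hξ : ξ ≠ 0) (hd : 9 * ξ ^ 2 ≠ 4) :
    2 * #{y : F | IsSquare (markoffDiscrim ξ y)} = Fintype.card F + 1 :=
  two_mul_card_filter_isSquare_mul_sq_sub_sq hF (sub_ne_zero.mpr hd)
    (mul_ne_zero (Ring.two_ne_zero hF) hξ)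

theorem exists_markoff_common_coord {F : Type*} [Field F] [Fintype F] (hF : ringChar F ≠ 2)
    {ξ₁ ξ₂ : F} (hξ₁ : ξ₁ ≠ 0) (hξ₂ : ξ₂ ≠ 0) (hd₁ : 9 * ξ₁ ^ 2 ≠ 4) (hd₂ : 9 * ξ₂ ^ 2 ≠ 4) :
    ∃ y : F, (∃ z : F, ξ₁ ^ 2 + y ^ 2 + z ^ 2 = 3 * ξ₁ * y * z) ∧
      (∃ z : F, ξ₂ ^ 2 + y ^ 2 + z ^ 2 = 3 * ξ₂ * y * z) := by
  classical
  have : NeZero (2 : F) := ⟨Ring.two_ne_zero hF⟩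
  have h₁ := two_mul_card_filter_isSquare_markoffDiscrim hF hξ₁ hd₁
  have h₂ := two_mul_card_filter_isSquare_markoffDiscrim hF hξ₂ hd₂
  obtain ⟨y, hy⟩ := inter_nonempty_of_card_lt_card_add_card
    (t := {y : F | IsSquare (markoffDiscrim ξ₁ y)}) (u := {y : F | IsSquare (markoffDiscrim ξ₂ y)})
    (subset_univ _) (subset_univ _) (by rw [card_univ]; omega)
  rw [mem_inter, mem_filter, mem_filter] at hy
  exact ⟨y, exists_markoff_of_isSquare_markoffDiscrim hy.1.2,
    exists_markoff_of_isSquare_markoffDiscrim hy.2.2⟩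

theorem markoff_incidence_diameter_two :
    ∃ P₀ : ℕ, ∀ p : ℕ, p.Prime → P₀ ≤ p →
      ∀ ξ₁ ξ₂ : ZMod p, ξ₁ ≠ 0 → ξ₂ ≠ 0 → 9 * ξ₁ ^ 2 ≠ 4 → 9 * ξ₂ ^ 2 ≠ 4 →
        ∃ y : ZMod p,
          (∃ z : ZMod p, ξ₁ ^ 2 + y ^ 2 + z ^ 2 = 3 * ξ₁ * y * z) ∧
          (∃ z : ZMod p, ξ₂ ^ 2 + y ^ 2 + z ^ 2 = 3 * ξ₂ * y * z) := by
  refine ⟨3, fun p hp hp3 ξ₁ ξ₂ => ?_⟩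
  have : Fact p.Prime := ⟨hp⟩
  exact exists_markoff_common_coord (by rw [ZMod.ringChar_zmod_n]; omega)
end

section
/- Let K be an algebraic closure of ℚ and let X*(K) = {(x₁,x₂,x₃) ∈ K³ : x₁²+x₂²+x₃² = 3x₁x₂x₃ and (x₁,x₂,x₃) ≠ (0,0,0)}. Then there is no nonempty finite subset of X*(K) that is invariant under all three coordinate permutations and the three Vieta involutions R₁, R₂, R₃ (where R₃(x₁,x₂,x₃) = (x₁,x₂,3x₁x₂−x₃) and R₁, R₂ act analogously). Equivalently, the group Γ generated by these maps has no finite orbit on X*(K). -/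
/-!
Embed `K` into `ℂ`. Fixing the third coordinate `c`, the composite of `R₁` with the swap of
the first two coordinates acts on the first two coordinates as the invertible linear map
`(a, b) ↦ (b, 3c b - a)`, whose eigenvalues `μ` satisfy `3c = μ + μ⁻¹`. On a finite invariant
set every nonzero vector `(a, b)` is periodic, so one of these eigenvalues is a root of unity, and
therefore `3c` is real with `|3c| ≤ 2`. By symmetry this holds for every coordinate, and a real
solution of `x² + y² + z² = 3xyz` with `|3z| ≤ 2` is zero, since then
`z² = 3xyz - x² - y² ≤ 2|x||y| - x² - y² ≤ 0`.
-/

open Function Set Module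

theorem Set.MapsTo.exists_iterate_eq_self {α : Type*} {f : α → α} {s : Set α}
    (hmaps : MapsTo f s s) (hinj : InjOn f s) (hs : s.Finite) {x : α} (hx : x ∈ s) :
    ∃ n ≠ 0, f^[n] x = x := by
  have : Finite s := hs
  obtain ⟨n, hn, hper⟩ :=
    mem_periodicPts.mp (((hmaps.restrict_inj).mpr hinj).mem_periodicPts ⟨x, hx⟩)
  refine ⟨n, hn.ne', ?_⟩
  simpa [IsPeriodicPt, IsFixedPt, hmaps.iterate_restrict, Subtype.ext_iff] using hper

theorem Module.End.exists_hasEigenvalue_pow_eq_one {K V : Type*} [Field K] [IsAlgClosed K]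
    [AddCommGroup V] [Module K V] [FiniteDimensional K V] {T : End K V} {n : ℕ} (hn : n ≠ 0)
    {v : V} (hv : v ≠ 0) (hper : (T ^ n) v = v) :
    ∃ μ, T.HasEigenvalue μ ∧ μ ^ n = 1 := by
  have hone : (T ^ n).HasEigenvalue 1 :=
    End.hasEigenvalue_of_hasEigenvector ⟨End.mem_eigenspace_iff.mpr (by simpa using hper), hv⟩
  obtain ⟨μ, hμ, hμn⟩ : (1 : K) ∈ (· ^ n) '' spectrum K T := by
    rw [← spectrum.map_pow_of_pos T (Nat.pos_of_ne_zero hn)]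
    exact hone.mem_spectrum
  exact ⟨μ, End.hasEigenvalue_iff_mem_spectrum.mpr hμ, hμn⟩

section VietaRotation

variable {K : Type*} [Field K]

def vietaRotation (t : K) : End K (K × K) :=
  (LinearMap.snd K K K).prod (t • LinearMap.snd K K K - LinearMap.fst K K K)

@[simp]
theorem vietaRotation_apply (t : K) (p : K × K) : vietaRotation t p = (p.2, t * p.2 - p.1) :=
  rfl

theorem vietaRotation_injective (t : K) : Injective (vietaRotation t) := by
  intro p q h
  simp only [vietaRotation_apply, Prod.ext_iff] at h
  obtain ⟨h2, h1⟩ := h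
  exact Prod.ext (by rw [h2] at h1; linear_combination -h1) h2

theorem eq_add_inv_of_hasEigenvalue_vietaRotation {t μ : K}
    (h : (vietaRotation t).HasEigenvalue μ) : t = μ + μ⁻¹ := by
  obtain ⟨v, hv⟩ := h.exists_hasEigenvector
  have hvμ := hv.apply_eq_smul
  simp only [vietaRotation_apply, Prod.ext_iff, Prod.smul_fst, Prod.smul_snd, smul_eq_mul] at hvμ
  obtain ⟨h2, h1⟩ := hvμ
  have hv1 : v.1 ≠ 0 := fun h0 => hv.2 (Prod.ext h0 (by rw [h2, h0, mul_zero]; rfl))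
  have hμ : μ ≠ 0 := by
    rintro rfl
    exact hv1 (by linear_combination t * h2 - h1)
  field_simp
  apply mul_right_cancel₀ hv1
  linear_combination h1 - (t - μ) * h2

end VietaRotation

theorem Markoff.fst_snd_ne_zero {R : Type*} [CommRing R] [NoZeroDivisors R] {a b c : R}
    (h : a ^ 2 + b ^ 2 + c ^ 2 = 3 * a * b * c) (hne : (a, b, c) ≠ (0, 0, 0)) : (a, b) ≠ 0 := by
  rintro hab
  obtain ⟨rfl, rfl⟩ := Prod.mk_eq_zero.mp hab
  have hc : c ^ 2 = 0 := by linear_combination h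
  exact hne (by rw [pow_eq_zero_iff two_ne_zero |>.mp hc])

theorem Markoff.exists_pow_eq_one_three_mul_eq_add_inv {K : Type*} [Field K] [IsAlgClosed K]
    {F : Set (K × K × K)} (hF : F.Finite)
    (hswap : ∀ x ∈ F, (x.2.1, x.1, x.2.2) ∈ F)
    (hR₁ : ∀ x ∈ F, (3 * x.2.1 * x.2.2 - x.1, x.2.1, x.2.2) ∈ F)
    {a b c : K} (hx : (a, b, c) ∈ F) (hab : (a, b) ≠ 0) :
    ∃ ζ : K, ∃ n ≠ 0, ζ ^ n = 1 ∧ 3 * c = ζ + ζ⁻¹ := by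
  set fibre := {p : K × K | (p.1, p.2, c) ∈ F}
  have hfin : fibre.Finite :=
    hF.preimage fun p _ q _ h => by simpa [Prod.ext_iff] using h
  have hmaps : MapsTo (vietaRotation (3 * c)) fibre fibre := fun p hp => by
    simpa [fibre, mul_right_comm] using hswap _ (hR₁ _ hp)
  obtain ⟨n, hn, hper⟩ := hmaps.exists_iterate_eq_self (vietaRotation_injective _).injOn hfin
    (show (a, b) ∈ fibre from hx)
  obtain ⟨μ, hμ, hμn⟩ := End.exists_hasEigenvalue_pow_eq_one (T := vietaRotation (3 * c)) hn hab
    (by rwa [End.pow_apply])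
  exact ⟨μ, n, hn, hμn, eq_add_inv_of_hasEigenvalue_vietaRotation hμ⟩

theorem Complex.exists_ofReal_eq_add_inv_of_pow_eq_one {ζ : ℂ} {n : ℕ} (h : ζ ^ n = 1)
    (hn : n ≠ 0) : ∃ r : ℝ, ζ + ζ⁻¹ = r ∧ |r| ≤ 2 := by
  refine ⟨2 * ζ.re, by rw [inv_eq_conj (norm_eq_one_of_pow_eq_one h hn), add_conj], ?_⟩
  rw [abs_mul, abs_two]
  linarith [abs_re_le_norm ζ, norm_eq_one_of_pow_eq_one h hn]

theorem Markoff.eq_zero_of_abs_le {x y z : ℝ} (h : x ^ 2 + y ^ 2 + z ^ 2 = 3 * x * y * z)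
    (hz : |3 * z| ≤ 2) : x = 0 ∧ y = 0 ∧ z = 0 := by
  have hz2 : z ^ 2 ≤ 0 :=
    calc z ^ 2 = 3 * z * (x * y) - (|x| ^ 2 + |y| ^ 2) := by rw [sq_abs, sq_abs]; linarith
      _ ≤ |3 * z| * (|x| * |y|) - (|x| ^ 2 + |y| ^ 2) := by
        rw [← abs_mul, ← abs_mul]; gcongr; exact le_abs_self _
      _ ≤ 2 * (|x| * |y|) - (|x| ^ 2 + |y| ^ 2) := by gcongr
      _ = -(|x| - |y|) ^ 2 := by ring
      _ ≤ 0 := neg_nonpos.mpr (sq_nonneg _)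
  have hz0 : z = 0 := pow_eq_zero_iff two_ne_zero |>.mp (le_antisymm hz2 (sq_nonneg z))
  subst hz0
  exact ⟨by nlinarith, by nlinarith, rfl⟩

theorem markoff_no_finite_orbit_char_zero
    (K : Type) [Field K] [Algebra ℚ K] [IsAlgClosure ℚ K] :
    ¬ ∃ F : Set (K × K × K), F.Nonempty ∧ F.Finite ∧
        F ⊆ {x : K × K × K |
          x.1 ^ 2 + x.2.1 ^ 2 + x.2.2 ^ 2 = 3 * x.1 * x.2.1 * x.2.2 ∧ x ≠ (0, 0, 0)} ∧
        (∀ x ∈ F, (x.2.1, x.1, x.2.2) ∈ F) ∧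
        (∀ x ∈ F, (x.1, x.2.2, x.2.1) ∈ F) ∧
        (∀ x ∈ F, (x.2.2, x.2.1, x.1) ∈ F) ∧
        (∀ x ∈ F, (3 * x.2.1 * x.2.2 - x.1, x.2.1, x.2.2) ∈ F) ∧
        (∀ x ∈ F, (x.1, 3 * x.1 * x.2.2 - x.2.1, x.2.2) ∈ F) ∧
        (∀ x ∈ F, (x.1, x.2.1, 3 * x.1 * x.2.1 - x.2.2) ∈ F) := by
  rintro ⟨F, ⟨⟨a, b, c⟩, hx⟩, hF, hsub, h₁₂, h₂₃, h₁₃, hR₁, -, -⟩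
  have : IsAlgClosed K := IsAlgClosure.isAlgClosed ℚ
  have : Algebra.IsAlgebraic ℚ K := IsAlgClosure.isAlgebraic
  let φ : K →+* ℂ := (IsAlgClosed.lift : K →ₐ[ℚ] ℂ)
  have real_coord {p q r : K} (hpqr : (p, q, r) ∈ F) : ∃ s : ℝ, φ r = s ∧ |3 * s| ≤ 2 := by
    obtain ⟨ζ, n, hn, hζn, hr⟩ := Markoff.exists_pow_eq_one_three_mul_eq_add_inv hF h₁₂ hR₁ hpqr
      (Markoff.fst_snd_ne_zero (hsub hpqr).1 (hsub hpqr).2)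
    obtain ⟨s, hs, hs2⟩ :=
      Complex.exists_ofReal_eq_add_inv_of_pow_eq_one (ζ := φ ζ) (by rw [← map_pow, hζn, map_one]) hn
    have hφr : 3 * φ r = φ ζ + (φ ζ)⁻¹ := by
      rw [← map_ofNat φ 3, ← map_mul, hr, map_add, map_inv₀]
    refine ⟨s / 3, ?_, by rwa [mul_div_cancel₀ _ three_ne_zero]⟩
    push_cast
    linear_combination hφr / 3 + hs / 3
  obtain ⟨x, hax, -⟩ := real_coord (h₁₃ _ hx)
  obtain ⟨y, hby, -⟩ := real_coord (h₂₃ _ hx)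
  obtain ⟨z, hcz, hz⟩ := real_coord hx
  obtain ⟨hmarkoff, hne⟩ := hsub hx
  have hreal : x ^ 2 + y ^ 2 + z ^ 2 = 3 * x * y * z := by
    have := congrArg φ hmarkoff
    simp only [map_add, map_mul, map_pow, map_ofNat, hax, hby, hcz] at this
    exact_mod_cast this
  obtain ⟨rfl, rfl, rfl⟩ := Markoff.eq_zero_of_abs_le hreal hz
  simp only [Complex.ofReal_zero, map_eq_zero_iff φ φ.injective] at hax hby hcz
  exact hne (by rw [hax, hby, hcz])
end

section
/- Let l₁, l₂, l₃ be positive integers, n = lcm(l₁, l₂, l₃), and let ζ₁, ζ₂, ζ₃ ∈ ℂ be primitive l₁-th, l₂-th and l₃-th roots of unity respectively. Define η = (ζ₁+ζ₁⁻¹)² + (ζ₂+ζ₂⁻¹)² + (ζ₃+ζ₃⁻¹)² − (ζ₁+ζ₁⁻¹)(ζ₂+ζ₂⁻¹)(ζ₃+ζ₃⁻¹), an algebraic integer lying in the cyclotomic field ℚ(ζ_n). If (l₁, l₂, l₃) ≠ (4,4,4) (i.e. not all ζ_j ∈ {i,−i}), then η ≠ 0 and |N_{ℚ(ζ_n)/ℚ}(η)|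 ≤ 20^{φ(n)}, where φ is Euler's totient function. In particular, any prime ideal P of the ring of integers of ℚ(ζ_n) containing η has norm N(P) ≤ 20^n. -/
/-!
Under every complex embedding `ζ + ζ⁻¹` becomes a real number `2 cos θ ∈ [-2, 2]`. On such reals
the form `x² + y² + z² - xyz` is bounded by `12 + 8 = 20`, and it vanishes only at the origin,
i.e. only if every `ζⱼ` is `±i`. The norm of `η` is the product of its `φ(n)` conjugates, and a
prime ideal containing `η` divides `(η)`, whose absolute norm is `|N(η)|`.
-/

def markoffForm {R : Type*} [CommRing R] (x y z : R) : R :=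
  x ^ 2 + y ^ 2 + z ^ 2 - x * y * z

theorem map_markoffForm {R S F : Type*} [CommRing R] [CommRing S] [FunLike F R S]
    [RingHomClass F R S] (f : F) (x y z : R) :
    f (markoffForm x y z) = markoffForm (f x) (f y) (f z) := by
  simp only [markoffForm, map_sub, map_add, map_mul, map_pow]

-- The binary form `x² - z x y + y²` is positive semidefinite when `|z| ≤ 2`.
theorem eq_zero_of_markoffForm_eq_zero {x y z : ℝ} (hz : |z| ≤ 2)
    (h : markoffForm x y z = 0) : x = 0 ∧ y = 0 ∧ z = 0 := by
  unfold markoffForm at h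
  have hz2 : z ^ 2 ≤ 4 := by nlinarith [sq_abs z, abs_nonneg z]
  have hz0 : z = 0 := by
    nlinarith [sq_nonneg (2 * x - y * z), mul_nonneg (sq_nonneg y) (sub_nonneg.2 hz2), sq_nonneg z]
  subst hz0
  exact ⟨by nlinarith [sq_nonneg y], by nlinarith [sq_nonneg x], rfl⟩

theorem abs_markoffForm_le {x y z : ℝ} (hx : |x| ≤ 2) (hy : |y| ≤ 2) (hz : |z| ≤ 2) :
    |markoffForm x y z| ≤ 20 := by
  have hxyz : |x * y * z| ≤ 8 := by
    rw [abs_mul, abs_mul]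
    calc |x| * |y| * |z| ≤ 2 * 2 * 2 := by gcongr
      _ = 8 := by norm_num
  have hsq : ∀ t : ℝ, |t| ≤ 2 → t ^ 2 ≤ 4 := fun t ht => by
    nlinarith [sq_abs t, abs_nonneg t]
  calc |markoffForm x y z| ≤ |x ^ 2 + y ^ 2 + z ^ 2| + |x * y * z| := abs_sub _ _
    _ ≤ 12 + 8 := by
      gcongr
      rw [abs_of_nonneg (by positivity)]
      linarith [hsq x hx, hsq y hy, hsq z hz]
    _ = 20 := by norm_num

theorem IsPrimitiveRoot.eq_four_of_add_inv_eq_zero {K : Type*} [Field K] [NeZero (2 : K)]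
    {ζ : K} {l : ℕ} (h : IsPrimitiveRoot ζ l) (hl : 0 < l) (h0 : ζ + ζ⁻¹ = 0) : l = 4 := by
  have hsq : ζ ^ 2 = -1 := by
    have hζ : ζ ≠ 0 := h.ne_zero hl.ne'
    field_simp at h0
    linear_combination h0
  rw [h.eq_orderOf]
  refine orderOf_eq_prime_pow (p := 2) (n := 1) ?_ ?_
  · rw [pow_one, hsq]
    exact fun h => two_ne_zero (α := K) (by linear_combination -h)
  · rw [show 2 ^ (1 + 1) = 2 * 2 by rfl, pow_mul, hsq]
    norm_num

theorem Complex.add_inv_eq_two_mul_re {z : ℂ} (hz : ‖z‖ = 1) : z + z⁻¹ = (2 * z.re : ℝ) := by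
  rw [inv_eq_conj hz, add_conj]

theorem Complex.abs_two_mul_re_le {z : ℂ} (hz : ‖z‖ = 1) : |2 * z.re| ≤ 2 := by
  rw [abs_mul, abs_two]
  linarith [abs_re_le_norm z]

theorem markoffForm_add_inv_eq_ofReal {z₁ z₂ z₃ : ℂ} (h₁ : ‖z₁‖ = 1) (h₂ : ‖z₂‖ = 1)
    (h₃ : ‖z₃‖ = 1) :
    markoffForm (z₁ + z₁⁻¹) (z₂ + z₂⁻¹) (z₃ + z₃⁻¹) =
      markoffForm (2 * z₁.re) (2 * z₂.re) (2 * z₃.re) := by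
  rw [Complex.add_inv_eq_two_mul_re h₁, Complex.add_inv_eq_two_mul_re h₂,
    Complex.add_inv_eq_two_mul_re h₃]
  exact (map_markoffForm Complex.ofRealHom _ _ _).symm

theorem norm_markoffForm_add_inv_le {z₁ z₂ z₃ : ℂ} (h₁ : ‖z₁‖ = 1) (h₂ : ‖z₂‖ = 1)
    (h₃ : ‖z₃‖ = 1) : ‖markoffForm (z₁ + z₁⁻¹) (z₂ + z₂⁻¹) (z₃ + z₃⁻¹)‖ ≤ 20 := by
  rw [markoffForm_add_inv_eq_ofReal h₁ h₂ h₃, Complex.norm_real, Real.norm_eq_abs]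
  exact abs_markoffForm_le (Complex.abs_two_mul_re_le h₁) (Complex.abs_two_mul_re_le h₂)
    (Complex.abs_two_mul_re_le h₃)

theorem markoffForm_add_inv_ne_zero {z₁ z₂ z₃ : ℂ} {l₁ l₂ l₃ : ℕ} (h₁ : IsPrimitiveRoot z₁ l₁)
    (h₂ : IsPrimitiveRoot z₂ l₂) (h₃ : IsPrimitiveRoot z₃ l₃) (hl₁ : 0 < l₁) (hl₂ : 0 < l₂)
    (hl₃ : 0 < l₃) (hne : (l₁, l₂, l₃) ≠ (4, 4, 4)) :
    markoffForm (z₁ + z₁⁻¹) (z₂ + z₂⁻¹) (z₃ + z₃⁻¹) ≠ 0 := by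
  have hn₁ := h₁.norm'_eq_one hl₁.ne'
  have hn₂ := h₂.norm'_eq_one hl₂.ne'
  have hn₃ := h₃.norm'_eq_one hl₃.ne'
  intro h0
  rw [markoffForm_add_inv_eq_ofReal hn₁ hn₂ hn₃, Complex.ofReal_eq_zero] at h0
  obtain ⟨e₁, e₂, e₃⟩ := eq_zero_of_markoffForm_eq_zero (Complex.abs_two_mul_re_le hn₃) h0
  have eq_four {z : ℂ} {l : ℕ} (h : IsPrimitiveRoot z l) (hl : 0 < l) (e : 2 * z.re = 0) : l = 4 :=
    h.eq_four_of_add_inv_eq_zero hl <| by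
      rw [Complex.add_inv_eq_two_mul_re (h.norm'_eq_one hl.ne'), e, Complex.ofReal_zero]
  exact hne (by rw [eq_four h₁ hl₁ e₁, eq_four h₂ hl₂ e₂, eq_four h₃ hl₃ e₃])

theorem abs_norm_le_pow_finrank {K : Type*} [Field K] [Algebra ℚ K] [FiniteDimensional ℚ K]
    {x : K} {B : ℝ} (h : ∀ σ : K →ₐ[ℚ] ℂ, ‖σ x‖ ≤ B) :
    |(Algebra.norm ℚ x : ℝ)| ≤ B ^ Module.finrank ℚ K := by
  classical
  calc |(Algebra.norm ℚ x : ℝ)| = ‖∏ σ : K →ₐ[ℚ] ℂ, σ x‖ := by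
        rw [← Algebra.norm_eq_prod_embeddings, eq_ratCast, Complex.norm_ratCast]
    _ ≤ ∏ _σ : K →ₐ[ℚ] ℂ, B := by
        rw [norm_prod]
        exact Finset.prod_le_prod (fun _ _ => norm_nonneg _) (fun σ _ => h σ)
    _ = B ^ Module.finrank ℚ K := by
        rw [Finset.prod_const, Finset.card_univ, AlgHom.card]

theorem Ideal.absNorm_le_natAbs_norm_of_mem {S : Type*} [CommRing S] [IsDedekindDomain S]
    [Module.Free ℤ S] [Module.Finite ℤ S] {I : Ideal S} {x : S} (hx : x ∈ I) (hx0 : x ≠ 0) :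
    I.absNorm ≤ (Algebra.norm ℤ x).natAbs :=
  Nat.le_of_dvd (Int.natAbs_pos.2 (Algebra.norm_ne_zero_iff.2 hx0))
    (Int.natCast_dvd.1 (absNorm_dvd_norm_of_mem hx))

theorem markoff_eta_norm_bound_general (l₁ l₂ l₃ : ℕ) (hl₁ : 0 < l₁) (hl₂ : 0 < l₂) (hl₃ : 0 < l₃)
    (n : ℕ+)
    (L : Type) [Field L] [Algebra ℚ L] [IsCyclotomicExtension {(n : ℕ)} ℚ L] [NumberField L]
    (ζ₁ ζ₂ ζ₃ : L) (h1 : IsPrimitiveRoot ζ₁ l₁) (h2 : IsPrimitiveRoot ζ₂ l₂)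
    (h3 : IsPrimitiveRoot ζ₃ l₃)
    (η : L)
    (hη : η = (ζ₁ + ζ₁⁻¹) ^ 2 + (ζ₂ + ζ₂⁻¹) ^ 2 + (ζ₃ + ζ₃⁻¹) ^ 2 -
      (ζ₁ + ζ₁⁻¹) * (ζ₂ + ζ₂⁻¹) * (ζ₃ + ζ₃⁻¹))
    (hne : (l₁, l₂, l₃) ≠ (4, 4, 4)) :
    η ≠ 0 ∧
    |Algebra.norm ℚ η| ≤ (20 : ℚ) ^ Nat.totient n ∧
    ∀ η' : NumberField.RingOfIntegers L, (η' : L) = η →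
      ∀ P : Ideal (NumberField.RingOfIntegers L), P.IsPrime → η' ∈ P →
        Ideal.absNorm P ≤ 20 ^ (n : ℕ) := by
  have hση (σ : L →+* ℂ) :
      σ η = markoffForm (σ ζ₁ + (σ ζ₁)⁻¹) (σ ζ₂ + (σ ζ₂)⁻¹) (σ ζ₃ + (σ ζ₃)⁻¹) := by
    rw [hη, ← markoffForm, map_markoffForm]
    simp only [map_add, map_inv₀]
  have hη0 : η ≠ 0 := by
    obtain ⟨σ⟩ : Nonempty (L →+* ℂ) := inferInstance
    rw [← (map_ne_zero_iff σ σ.injective), hση]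
    exact markoffForm_add_inv_ne_zero (h1.map_of_injective σ.injective)
      (h2.map_of_injective σ.injective) (h3.map_of_injective σ.injective) hl₁ hl₂ hl₃ hne
  have hση_le (σ : L →+* ℂ) : ‖σ η‖ ≤ 20 := by
    rw [hση]
    exact norm_markoffForm_add_inv_le ((h1.map_of_injective σ.injective).norm'_eq_one hl₁.ne')
      ((h2.map_of_injective σ.injective).norm'_eq_one hl₂.ne')
      ((h3.map_of_injective σ.injective).norm'_eq_one hl₃.ne')
  have hnorm : |Algebra.norm ℚ η| ≤ (20 : ℚ) ^ Nat.totient n := by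
    have hbound := abs_norm_le_pow_finrank fun σ : L →ₐ[ℚ] ℂ => hση_le σ.toRingHom
    rw [IsCyclotomicExtension.finrank L (Polynomial.cyclotomic.irreducible_rat n.pos)] at hbound
    exact_mod_cast hbound
  refine ⟨hη0, hnorm, fun η' hη' P _ hP => ?_⟩
  have hnormℤ : |(Algebra.norm ℤ η' : ℚ)| ≤ (20 : ℚ) ^ Nat.totient n := by
    rw [Algebra.coe_norm_int, hη']
    -- `Algebra.coe_norm_int` uses the canonical `ℚ`-algebra structure on `L`.
    convert hnorm
    exact Subsingleton.elim _ _
  calc Ideal.absNorm P ≤ (Algebra.norm ℤ η').natAbs :=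
        Ideal.absNorm_le_natAbs_norm_of_mem hP (by rintro rfl; exact hη0 hη'.symm)
    _ ≤ 20 ^ Nat.totient n := by
        rw [← Int.cast_abs, Int.abs_eq_natAbs] at hnormℤ
        exact_mod_cast hnormℤ
    _ ≤ 20 ^ (n : ℕ) := Nat.pow_le_pow_right (by norm_num) (Nat.totient_le n)

theorem markoff_eta_norm_bound (l₁ l₂ l₃ : ℕ) (hl₁ : 0 < l₁) (hl₂ : 0 < l₂) (hl₃ : 0 < l₃)
    (n : ℕ+) (hn : (n : ℕ) = Nat.lcm (Nat.lcm l₁ l₂) l₃)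
    (L : Type) [Field L] [Algebra ℚ L] [IsCyclotomicExtension {(n : ℕ)} ℚ L] [NumberField L]
    (ζ₁ ζ₂ ζ₃ : L) (h1 : IsPrimitiveRoot ζ₁ l₁) (h2 : IsPrimitiveRoot ζ₂ l₂)
    (h3 : IsPrimitiveRoot ζ₃ l₃)
    (η : L)
    (hη : η = (ζ₁ + ζ₁⁻¹) ^ 2 + (ζ₂ + ζ₂⁻¹) ^ 2 + (ζ₃ + ζ₃⁻¹) ^ 2 -
      (ζ₁ + ζ₁⁻¹) * (ζ₂ + ζ₂⁻¹) * (ζ₃ + ζ₃⁻¹))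
    (hne : (l₁, l₂, l₃) ≠ (4, 4, 4)) :
    η ≠ 0 ∧
    |Algebra.norm ℚ η| ≤ (20 : ℚ) ^ Nat.totient n ∧
    ∀ η' : NumberField.RingOfIntegers L, (η' : L) = η →
      ∀ P : Ideal (NumberField.RingOfIntegers L), P.IsPrime → η' ∈ P →
        Ideal.absNorm P ≤ 20 ^ (n : ℕ) :=
  markoff_eta_norm_bound_general l₁ l₂ l₃ hl₁ hl₂ hl₃ n L ζ₁ ζ₂ ζ₃ h1 h2 h3 η hη hne
end

section
/- Let p be a prime and let ξ = (ξ₁, ξ₂, ξ₃) ∈ (ℤ/pℤ)³ satisfy ξ₁²+ξ₂²+ξ₃² = 3ξ₁ξ₂ξ₃ with ξ ≠ (0,0,0). Let F be the field with p² elements containing ℤ/pℤ, and for j = 1,2,3 let λ_j ∈ Fˣ satisfy λ_j + λ_j⁻¹ = 3ξ_j (such λ_j always exist). Then max(ord(λ₁), ord(λ₂), ord(λ₃)) ≥ (log p / log 20)^{1/3}, where ord denotes the multiplicative order in Fˣ. -/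
/-!
Write `λⱼ = g ^ eⱼ` for a primitive `m`-th root of unity `g ∈ F`, where `m` is the lcm of the
orders, so `m ≤ D ^ 3` for `D` the largest order. With `Tₑ = Xᵉ + X⁻ᵉ` and
`M(x, y, z) = x² + y² + z² - xyz`, the integer polynomial `P = M(T_{e₁}, T_{e₂}, T_{e₃})` vanishes
at `g` because `T_{eⱼ}(g) = λⱼ + λⱼ⁻¹ = 3ξⱼ`, so `p` divides the resultant `N = Res(Φₘ, P)`.
Over `ℂ`, `N` is the product of `P(w)` over the primitive `m`-th roots `w`. There
`T_{eⱼ}(w) = 2 Re wᵉʲ ∈ [-2, 2]`, whence `|P(w)| ≤ 20`; and `P(w) ≠ 0`, since otherwise every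
`T_{eⱼ}(w)` vanishes, so `Φₘ ∣ T_{eⱼ}` and `3ξⱼ = T_{eⱼ}(g) = 0`. Hence
`p ≤ |N| ≤ 20 ^ φ(m) ≤ 20 ^ (D ^ 3)`.
-/

open Polynomial

theorem Polynomial.intCast_resultant_cyclotomic {K : Type*} [CommRing K] [IsDomain K] {m : ℕ}
    {ζ : K} (hζ : IsPrimitiveRoot ζ m) (P : ℤ[X]) :
    ((resultant (cyclotomic m ℤ) P : ℤ) : K) = ∏ w ∈ primitiveRoots m K, aeval w P := by
  have hΦ : cyclotomic m K = ∏ w ∈ primitiveRoots m K, (X - C w) :=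
    cyclotomic_eq_prod_X_sub_primitiveRoots hζ
  have hsplit : (cyclotomic m K).Splits := hΦ ▸ Splits.prod fun w _ => Splits.X_sub_C w
  rw [← eq_intCast (Int.castRingHom K), ← resultant_map_map, map_cyclotomic,
    show (cyclotomic m ℤ).natDegree = (cyclotomic m K).natDegree by
      simp only [natDegree_cyclotomic],
    resultant_eq_prod_eval _ _ _ natDegree_map_le hsplit, (cyclotomic.monic m K).leadingCoeff,
    one_pow, one_mul, hΦ, roots_prod_X_sub_C]
  simp only [Finset.prod_map_val, eval_map, aeval_def, algebraMap_int_eq]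

theorem IsPrimitiveRoot.aeval_eq_zero_of_aeval_eq_zero {K R : Type*} [Field K] [CharZero K]
    [CommRing R] [IsDomain R] {m : ℕ} (hm : 0 < m) {w : K} {g : R} (hw : IsPrimitiveRoot w m)
    (hg : IsPrimitiveRoot g m) {Q : ℤ[X]} (hQ : aeval w Q = 0) : aeval g Q = 0 := by
  obtain ⟨A, rfl⟩ : cyclotomic m ℤ ∣ Q :=
    cyclotomic_eq_minpoly hw hm ▸ minpoly.isIntegrallyClosed_dvd (hw.isIntegral hm) hQ
  rw [map_mul, aeval_def, eval₂_eq_eval_map, map_cyclotomic, (hg.isRoot_cyclotomic hm).eq_zero,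
    zero_mul]

theorem le_pow_totient_of_aeval_primitiveRoot_eq_zero {R : Type*} [CommRing R] [IsDomain R]
    (p : ℕ) [CharP R p] {m : ℕ} (hm : 0 < m) {g : R} (hg : IsPrimitiveRoot g m) {P : ℤ[X]}
    (hPg : aeval g P = 0) {C : ℝ}
    (hP : ∀ w : ℂ, IsPrimitiveRoot w m → aeval w P ≠ 0 ∧ ‖aeval w P‖ ≤ C) :
    (p : ℝ) ≤ C ^ m.totient := by
  set N := resultant (cyclotomic m ℤ) P
  have hNC : (N : ℂ) = ∏ w ∈ primitiveRoots m ℂ, aeval w P :=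
    intCast_resultant_cyclotomic (Complex.isPrimitiveRoot_exp m hm.ne') P
  have hp_dvd : (p : ℤ) ∣ N := by
    rw [← CharP.intCast_eq_zero_iff R p, intCast_resultant_cyclotomic hg]
    exact Finset.prod_eq_zero ((mem_primitiveRoots hm).2 hg) hPg
  have hN0 : N ≠ 0 := by
    rintro hN
    rw [hN, Int.cast_zero, eq_comm, Finset.prod_eq_zero_iff] at hNC
    obtain ⟨w, hw, hw0⟩ := hNC
    exact (hP w ((mem_primitiveRoots hm).1 hw)).1 hw0
  have hN_le : (|N| : ℝ) ≤ C ^ m.totient := by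
    rw [← Complex.card_primitiveRoots, ← Finset.prod_const, ← Complex.norm_intCast, hNC, norm_prod]
    exact Finset.prod_le_prod (fun _ _ => norm_nonneg _)
      fun w hw => (hP w ((mem_primitiveRoots hm).1 hw)).2
  calc (p : ℝ) = ((p : ℤ) : ℝ) := rfl
    _ ≤ |(N : ℝ)| := by exact_mod_cast Int.le_of_dvd (abs_pos.2 hN0) ((dvd_abs _ _).2 hp_dvd)
    _ ≤ C ^ m.totient := hN_le

/-- The Markoff form in the coordinates `x = 3ξ`, in which the surface is `markoff x y z = 0`. -/
def markoff {R : Type*} [CommRing R] (x y z : R) : R := x ^ 2 + y ^ 2 + z ^ 2 - x * y * z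

theorem map_markoff {R S F : Type*} [CommRing R] [CommRing S] [FunLike F R S] [RingHomClass F R S]
    (f : F) (x y z : R) : f (markoff x y z) = markoff (f x) (f y) (f z) := by
  simp only [markoff, map_sub, map_add, map_mul, map_pow]

theorem abs_markoff_le {a b c : ℝ} (ha : |a| ≤ 2) (hb : |b| ≤ 2) (hc : |c| ≤ 2) :
    |markoff a b c| ≤ 20 :=
  calc |markoff a b c| ≤ |a| ^ 2 + |b| ^ 2 + |c| ^ 2 + |a| * |b| * |c| := by
        have h₁ := abs_sub (a ^ 2 + b ^ 2 + c ^ 2) (a * b * c)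
        have h₂ := abs_add_three (a ^ 2) (b ^ 2) (c ^ 2)
        simp only [markoff, abs_pow, abs_mul] at *
        linarith
    _ ≤ 2 ^ 2 + 2 ^ 2 + 2 ^ 2 + 2 * 2 * 2 := by gcongr
    _ = 20 := by norm_num

theorem eq_zero_of_markoff_eq_zero {a b c : ℝ} (ha : |a| ≤ 2) (h : markoff a b c = 0) :
    a = 0 ∧ b = 0 ∧ c = 0 := by
  have ha2 : a ^ 2 ≤ 4 := by nlinarith [sq_abs a, abs_nonneg a]
  -- `4 (b² + c² - abc) = (2b - ac)² + (4 - a²) c²` is a sum of squares since `|a| ≤ 2`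
  have hbc : 0 ≤ b ^ 2 + c ^ 2 - a * b * c := by
    nlinarith [sq_nonneg (2 * b - a * c), mul_nonneg (sub_nonneg.2 ha2) (sq_nonneg c)]
  unfold markoff at h
  have ha0 : a = 0 := by nlinarith [sq_nonneg a]
  subst ha0
  exact ⟨rfl, by nlinarith [sq_nonneg b, sq_nonneg c], by nlinarith [sq_nonneg b, sq_nonneg c]⟩

/-- Modulo `X ^ m - 1` the monomial `X ^ ((m - 1) * e)` is `X⁻ᵉ`. -/
noncomputable def powAddPowInv (m e : ℕ) : ℤ[X] := X ^ e + X ^ ((m - 1) * e)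

theorem aeval_powAddPowInv {K : Type*} [Field K] {m : ℕ} (hm : 0 < m) {x : K} (hx : x ^ m = 1)
    (e : ℕ) : aeval x (powAddPowInv m e) = x ^ e + (x ^ e)⁻¹ := by
  have hinv : x ^ ((m - 1) * e) * x ^ e = 1 := by
    rw [← pow_add, ← Nat.succ_mul, Nat.succ_eq_add_one, Nat.sub_add_cancel hm, pow_mul, hx,
      one_pow]
  simp only [powAddPowInv, map_add, map_pow, aeval_X, eq_inv_of_mul_eq_one_left hinv]

theorem exists_abs_le_two_aeval_powAddPowInv {m : ℕ} (hm : 0 < m) {w : ℂ} (hw : w ^ m = 1)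
    (e : ℕ) : ∃ r : ℝ, |r| ≤ 2 ∧ aeval w (powAddPowInv m e) = r := by
  have hnorm : ‖w ^ e‖ = 1 := by
    rw [norm_pow, Complex.norm_eq_one_of_pow_eq_one hw hm.ne', one_pow]
  refine ⟨2 * (w ^ e).re, ?_, ?_⟩
  · rw [abs_mul, abs_two]
    linarith [hnorm ▸ Complex.abs_re_le_norm (w ^ e)]
  · rw [aeval_powAddPowInv hm hw, Complex.inv_eq_conj hnorm, Complex.add_conj]

theorem le_twenty_pow_totient_of_markoff {K : Type*} [Field K] (p : ℕ) [CharP K p] {m : ℕ}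
    (hm : 0 < m) {g : K} (hg : IsPrimitiveRoot g m) {x₁ x₂ x₃ : K}
    (hmarkoff : markoff x₁ x₂ x₃ = 0) (hne : (x₁, x₂, x₃) ≠ 0) {e₁ e₂ e₃ : ℕ}
    (h₁ : g ^ e₁ + (g ^ e₁)⁻¹ = x₁) (h₂ : g ^ e₂ + (g ^ e₂)⁻¹ = x₂)
    (h₃ : g ^ e₃ + (g ^ e₃)⁻¹ = x₃) :
    (p : ℝ) ≤ 20 ^ m.totient := by
  have hg_trace (e : ℕ) := aeval_powAddPowInv hm hg.pow_eq_one e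
  refine le_pow_totient_of_aeval_primitiveRoot_eq_zero p hm hg
    (P := markoff (powAddPowInv m e₁) (powAddPowInv m e₂) (powAddPowInv m e₃)) ?_ ?_
  · rw [map_markoff, hg_trace, hg_trace, hg_trace, h₁, h₂, h₃, hmarkoff]
  intro w hw
  obtain ⟨r₁, hr₁, hw₁⟩ := exists_abs_le_two_aeval_powAddPowInv hm hw.pow_eq_one e₁
  obtain ⟨r₂, hr₂, hw₂⟩ := exists_abs_le_two_aeval_powAddPowInv hm hw.pow_eq_one e₂
  obtain ⟨r₃, hr₃, hw₃⟩ := exists_abs_le_two_aeval_powAddPowInv hm hw.pow_eq_one e₃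
  have hw_markoff : markoff (r₁ : ℂ) r₂ r₃ = (markoff r₁ r₂ r₃ : ℝ) :=
    (map_markoff Complex.ofRealHom r₁ r₂ r₃).symm
  rw [map_markoff, hw₁, hw₂, hw₃, hw_markoff, Complex.norm_real, Real.norm_eq_abs, Ne,
    Complex.ofReal_eq_zero]
  refine ⟨fun h0 => hne ?_, abs_markoff_le hr₁ hr₂ hr₃⟩
  have hx_zero {e : ℕ} {x : K} (hx : g ^ e + (g ^ e)⁻¹ = x) {r : ℝ}
      (hr : aeval w (powAddPowInv m e) = r) (hr0 : r = 0) : x = 0 := by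
    rw [← hx, ← hg_trace]
    exact hw.aeval_eq_zero_of_aeval_eq_zero hm hg (by rw [hr, hr0, Complex.ofReal_zero])
  obtain ⟨hr₁0, hr₂0, hr₃0⟩ := eq_zero_of_markoff_eq_zero hr₁ h0
  rw [hx_zero h₁ hw₁ hr₁0, hx_zero h₂ hw₂ hr₂0, hx_zero h₃ hw₃ hr₃0]
  rfl

theorem orderOf_pos_of_ne_zero {K : Type*} [GroupWithZero K] [Finite K] {x : K} (hx : x ≠ 0) :
    0 < orderOf x :=
  hx.isUnit.isOfFinOrder.orderOf_pos

theorem exists_isPrimitiveRoot_lcm_pow_eq {R : Type*} [CommRing R] [IsDomain R] {x₁ x₂ x₃ : R}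
    (h₁ : 0 < orderOf x₁) (h₂ : 0 < orderOf x₂) (h₃ : 0 < orderOf x₃) :
    ∃ g : R, IsPrimitiveRoot g (((orderOf x₁).lcm (orderOf x₂)).lcm (orderOf x₃)) ∧
      (∃ e, g ^ e = x₁) ∧ (∃ e, g ^ e = x₂) ∧ (∃ e, g ^ e = x₃) := by
  obtain ⟨y, -, hy⟩ := (Commute.all x₁ x₂).exists_orderOf_eq_lcm
  obtain ⟨g, -, hg⟩ := (Commute.all y x₃).exists_orderOf_eq_lcm
  rw [hy] at hg
  have : NeZero (((orderOf x₁).lcm (orderOf x₂)).lcm (orderOf x₃)) :=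
    ⟨(Nat.lcm_pos (Nat.lcm_pos h₁ h₂) h₃).ne'⟩
  have hg_prim := hg ▸ IsPrimitiveRoot.orderOf g
  have hg_pow {x : R} (hx : orderOf x ∣ orderOf g) : ∃ e, g ^ e = x :=
    let ⟨e, _, he⟩ := hg_prim.eq_pow_of_pow_eq_one (hg ▸ orderOf_dvd_iff_pow_eq_one.1 hx)
    ⟨e, he⟩
  rw [hg] at hg_pow
  exact ⟨g, hg_prim, hg_pow ((Nat.dvd_lcm_left _ _).trans (Nat.dvd_lcm_left _ _)),
    hg_pow ((Nat.dvd_lcm_right _ _).trans (Nat.dvd_lcm_left _ _)), hg_pow (Nat.dvd_lcm_right _ _)⟩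

theorem Nat.lcm_lcm_le_max_pow_three {a b c : ℕ} (ha : 0 < a) (hb : 0 < b) (hc : 0 < c) :
    (a.lcm b).lcm c ≤ max (max a b) c ^ 3 :=
  calc (a.lcm b).lcm c ≤ a * b * c :=
        Nat.le_of_dvd (by positivity)
          ((Nat.lcm_dvd_mul _ c).trans (Nat.mul_dvd_mul_right (Nat.lcm_dvd_mul a b) c))
    _ ≤ max (max a b) c ^ 3 := by
        rw [pow_three, ← mul_assoc]
        gcongr
        · exact le_max_of_le_left (le_max_left a b)
        · exact le_max_of_le_left (le_max_right a b)
        · exact le_max_right _ c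

theorem Real.log_div_log_rpow_one_div_three_le {b x : ℝ} (hb : 1 < b) (hx : 1 ≤ x) {n : ℕ}
    (h : x ≤ b ^ (n ^ 3)) : (Real.log x / Real.log b) ^ ((1 : ℝ) / 3) ≤ n := by
  have hlogb : 0 < Real.log b := Real.log_pos hb
  have hquot : Real.log x / Real.log b ≤ (n : ℝ) ^ 3 := by
    rw [div_le_iff₀ hlogb]
    calc Real.log x ≤ Real.log (b ^ (n ^ 3)) := Real.log_le_log (by linarith) h
      _ = (n : ℝ) ^ 3 * Real.log b := by rw [Real.log_pow]; push_cast; ring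
  calc (Real.log x / Real.log b) ^ ((1 : ℝ) / 3)
      ≤ ((n : ℝ) ^ 3) ^ ((1 : ℝ) / 3) :=
        Real.rpow_le_rpow (div_nonneg (Real.log_nonneg hx) hlogb.le) hquot (by norm_num)
    _ = n := by
        rw [← Real.rpow_natCast (n : ℝ) 3, ← Real.rpow_mul (by positivity)]
        norm_num

theorem markoff_rotation_order_lower_bound (p : ℕ) [hp : Fact p.Prime]
    (ξ₁ ξ₂ ξ₃ : ZMod p)
    (hsurf : ξ₁ ^ 2 + ξ₂ ^ 2 + ξ₃ ^ 2 = 3 * ξ₁ * ξ₂ * ξ₃)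
    (hne : (ξ₁, ξ₂, ξ₃) ≠ (0, 0, 0))
    (F : Type) [Field F] [Algebra (ZMod p) F] (hcard : Nat.card F = p ^ 2)
    (lam₁ lam₂ lam₃ : F) (hlam₁0 : lam₁ ≠ 0) (hlam₂0 : lam₂ ≠ 0) (hlam₃0 : lam₃ ≠ 0)
    (hlam₁ : lam₁ + lam₁⁻¹ = algebraMap (ZMod p) F (3 * ξ₁))
    (hlam₂ : lam₂ + lam₂⁻¹ = algebraMap (ZMod p) F (3 * ξ₂))
    (hlam₃ : lam₃ + lam₃⁻¹ = algebraMap (ZMod p) F (3 * ξ₃)) :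
    (Real.log p / Real.log 20) ^ ((1 : ℝ) / 3) ≤
      (max (max (orderOf lam₁) (orderOf lam₂)) (orderOf lam₃) : ℝ) := by
  have : Finite F := Nat.finite_of_card_ne_zero (hcard ▸ pow_ne_zero 2 hp.out.ne_zero)
  have : CharP F p := charP_of_injective_algebraMap (algebraMap (ZMod p) F).injective p
  have h₁ := orderOf_pos_of_ne_zero hlam₁0
  have h₂ := orderOf_pos_of_ne_zero hlam₂0
  have h₃ := orderOf_pos_of_ne_zero hlam₃0
  set D := max (max (orderOf lam₁) (orderOf lam₂)) (orderOf lam₃)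
  have hm_le := Nat.lcm_lcm_le_max_pow_three h₁ h₂ h₃
  have hD3 : 0 < D ^ 3 := by positivity
  suffices hp_le : (p : ℝ) ≤ 20 ^ (D ^ 3) by
    exact_mod_cast Real.log_div_log_rpow_one_div_three_le (by norm_num)
      (by exact_mod_cast hp.out.one_lt.le) hp_le
  rcases le_or_gt p 20 with hp20 | hp20
  · calc (p : ℝ) ≤ 20 := by exact_mod_cast hp20
      _ ≤ 20 ^ (D ^ 3) := le_self_pow₀ (by norm_num) hD3.ne'
  have h3 : (3 : ZMod p) ≠ 0 := by
    exact_mod_cast (ZMod.natCast_eq_zero_iff 3 p).not.2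
      (Nat.not_dvd_of_pos_of_lt (by norm_num) (by omega))
  obtain ⟨g, hg, ⟨e₁, rfl⟩, ⟨e₂, rfl⟩, ⟨e₃, rfl⟩⟩ := exists_isPrimitiveRoot_lcm_pow_eq h₁ h₂ h₃
  calc (p : ℝ) ≤ 20 ^ Nat.totient _ := le_twenty_pow_totient_of_markoff p
        (Nat.lcm_pos (Nat.lcm_pos h₁ h₂) h₃) hg ?_ ?_ hlam₁ hlam₂ hlam₃
    _ ≤ 20 ^ (D ^ 3) := pow_le_pow_right₀ (by norm_num) ((Nat.totient_le _).trans hm_le)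
  · rw [← map_markoff, show markoff (3 * ξ₁) (3 * ξ₂) (3 * ξ₃) = 0 by
      unfold markoff; linear_combination 9 * hsurf, map_zero]
  · simpa [Prod.ext_iff, h3] using hne
end

section
/- There exist an absolute constant C and P₀ such that for every prime p ≥ P₀, every divisor t of p − 1 with t ≤ p^{3/4}, and every b ∈ ℤ/pℤ with b ≠ 1, the number of pairs (w, ρ) ∈ (ℤ/pℤ)ˣ × (ℤ/pℤ)ˣ satisfying w + w⁻¹ = ρ + b·ρ⁻¹ and w^t = ρ^t = 1 is at most C·t^{3/4}. -/
/-!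
Put `η = w / ρ` and `ξ = w ρ`. The trace equation becomes `ξ (η - 1) = b η - 1`, so `η ≠ 1` (as
`b ≠ 1`), `η` lies in the group `U_t` of `t`-th roots of unity, and so does
`ξ = (b η - 1) / (η - 1)`, i.e. `(b η - 1) ^ t = (η - 1) ^ t`; moreover `η` determines `ξ`, hence
`(w, ρ)` up to sign. It remains to count the points `η` of `U_t` with `(b η - 1) ^ t = (η - 1) ^ t`,
which is done by Stepanov's method. With `q = ⌊t ^ (1/4)⌋`, consider
`Ψ = ∑ l_{j,a,i} X ^ (a + t i) (b X - 1) ^ (t j) (X - 1) ^ (t (J - j))` with `a < q³`, `i < q`,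
`j ≤ J = 2q + 12`. At every such `η` the `t`-th powers collapse, so each Hasse derivative of `Ψ`
of order `k < 2q²` at `η` is, up to a nonzero factor, the value at `η` of a polynomial of degree
`< q³ + 6q²` that is linear in `l`; there are fewer such coefficients than unknowns `l`, so some
`l ≠ 0` makes them all vanish and `Ψ` vanishes to order `2q²` at every `η`. This `Ψ` is nonzero:
grouping by `j`, `Ψ` is a combination of powers of the coprime `(b X - 1) ^ t` and `(X - 1) ^ t`
with coefficients having at most `q⁴ ≤ t` terms, and a nonzero polynomial with `n` terms
(of degree `< p`) has no root `≠ 0` of multiplicity `n` or more. Comparing with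
`deg Ψ ≤ q³ + 3 t q + 12 t` bounds the number of `η` by `O(t / q) = O(t ^ (3/4))`.
-/

open Polynomial Finset

namespace Polynomial

theorem coeff_C_mul_X_add_C_pow {R : Type*} [CommSemiring R] (u v : R) (n k : ℕ) :
    ((C u * X + C v) ^ n).coeff k = n.choose k * u ^ k * v ^ (n - k) := by
  simp_rw [add_pow, finsetSum_coeff, mul_pow, ← C_pow, mul_assoc, mul_comm (X ^ _),
    ← mul_assoc, ← C_eq_natCast, ← C_mul, coeff_C_mul_X_pow]
  rw [sum_ite_eq]
  split_ifs with hk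
  · ring
  · rw [Nat.choose_eq_zero_of_lt (by simpa using hk)]; simp

theorem pow_mul_coeff_C_mul_X_add_C_pow {R : Type*} [CommSemiring R] (u v : R) {t : ℕ} {s : R}
    (hv : v ^ t = s) (r m : ℕ) {i k : ℕ} (hik : i ≤ k) :
    v ^ k * ((C u * X + C v) ^ (r + t * m)).coeff i
      = s ^ m * ((r + t * m).choose i * u ^ i * v ^ (r + k - i)) := by
  rw [coeff_C_mul_X_add_C_pow]
  rcases le_or_gt i (r + t * m) with hi | hi
  · rw [← hv, ← pow_mul]
    calc v ^ k * ((r + t * m).choose i * u ^ i * v ^ (r + t * m - i))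
        = (r + t * m).choose i * u ^ i * v ^ (t * m + (r + k - i)) := by
          rw [show t * m + (r + k - i) = k + (r + t * m - i) by omega, pow_add]; ring
      _ = _ := by rw [pow_add]; ring
  · rw [Nat.choose_eq_zero_of_lt hi]; simp

theorem coeff_X_mul_derivative {R : Type*} [CommSemiring R] (f : R[X]) (n : ℕ) :
    (X * derivative f).coeff n = n * f.coeff n := by
  cases n with
  | zero => simp
  | succ n => rw [coeff_X_mul, coeff_derivative]; push_cast; ring

/-- With `m = deg f`, the Euler operator `X f' - m f` kills the monomial `X ^ m` and rescales every other one by a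
nonzero scalar, while lowering the multiplicity of a root by at most one. -/
theorem rootMultiplicity_lt_card_support {F : Type*} [Field F] (p : ℕ) [CharP F p] {f : F[X]} (hf : f ≠ 0)
    (hdeg : f.natDegree < p) {x : F} (hx : x ≠ 0) : f.rootMultiplicity x < #f.support := by
  induction hs : #f.support generalizing f with
  | zero => simp_all
  | succ s ih =>
    set m := f.natDegree
    set g := X * derivative f - C (m : F) * f with hg_def
    have hsupp : g.support = f.support.erase m := by
      ext n
      simp only [mem_support_iff, mem_erase, hg_def, coeff_sub, coeff_X_mul_derivative,
        coeff_C_mul, ← sub_mul, mul_ne_zero_iff, sub_ne_zero, and_congr_left_iff]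
      intro hn
      have hnp : n < p := (le_natDegree_of_mem_supp n (mem_support_iff.2 hn)).trans_lt hdeg
      exact not_congr ⟨fun h => ((CharP.natCast_eq_natCast F p).1 h).eq_of_lt_of_lt hnp hdeg,
        fun h => h ▸ rfl⟩
    have hcard : #g.support = s := by
      rw [hsupp, card_erase_of_mem (natDegree_mem_support_of_nonzero hf), hs]; rfl
    by_cases hg : g = 0
    · obtain ⟨k, c, hc, rfl⟩ := card_support_eq_one.1 (by rw [hs, ← hcard, hg]; rfl)
      rw [rootMultiplicity_eq_zero (by simp [hc, hx])]
      omega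
    · have hdvd : (X - C x) ^ (f.rootMultiplicity x - 1) ∣ g :=
        dvd_sub (dvd_mul_of_dvd_right (pow_sub_one_dvd_derivative_of_pow_dvd
          (pow_rootMultiplicity_dvd f x)) X)
          (dvd_mul_of_dvd_right ((pow_dvd_pow _ (Nat.sub_le _ _)).trans
          (pow_rootMultiplicity_dvd f x)) _)
      have hgdeg : g.natDegree < p := by
        refine lt_of_le_of_lt (le_natDegree_of_mem_supp _ ?_) hdeg
        exact mem_of_mem_erase (hsupp ▸ natDegree_mem_support_of_nonzero hg)
      have := (le_rootMultiplicity_iff hg).2 hdvd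
      have := ih hg hgdeg hcard
      omega

theorem sum_rootMultiplicity_le_natDegree {R : Type*} [CommRing R] [IsDomain R] (f : R[X])
    (S : Finset R) : ∑ x ∈ S, f.rootMultiplicity x ≤ f.natDegree := by
  classical
  simp_rw [← count_roots]
  calc ∑ x ∈ S, f.roots.count x ≤ ∑ x ∈ f.roots.toFinset, f.roots.count x :=
        sum_le_sum_of_ne_zero fun x _ hx => Multiset.mem_toFinset.2 (Multiset.count_ne_zero.1 hx)
    _ = Multiset.card f.roots := Multiset.toFinset_sum_count_eq _
    _ ≤ f.natDegree := card_roots' f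

end Polynomial

theorem eq_zero_of_sum_mul_pow_eq_zero {R : Type*} [CommRing R] [IsDomain R] {P Q : R}
    (hP : P ≠ 0) (hPQ : IsCoprime P Q) (J : ℕ) {G : Fin (J + 1) → R}
    (hG : ∀ j, P ∣ G j → G j = 0) (h : ∑ j, G j * Q ^ (j : ℕ) * P ^ (J - j) = 0) : G = 0 := by
  induction J with
  | zero => funext j; fin_cases j; simpa using h
  | succ J ih =>
    rw [Fin.sum_univ_castSucc] at h
    have hsplit : ∑ j : Fin (J + 1), G j.castSucc * Q ^ (j : ℕ) * P ^ (J + 1 - j)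
        = P * ∑ j : Fin (J + 1), G j.castSucc * Q ^ (j : ℕ) * P ^ (J - j) := by
      rw [mul_sum]
      refine sum_congr rfl fun j _ => ?_
      rw [show J + 1 - j = J - j + 1 by omega, pow_succ]
      ring
    simp only [Fin.val_castSucc, Fin.val_last, Nat.sub_self, pow_zero, mul_one, hsplit] at h
    have hlast : G (Fin.last _) = 0 := hG _ <| (hPQ.pow_right (n := J + 1)).dvd_of_dvd_mul_right
      ⟨-∑ j : Fin (J + 1), G j.castSucc * Q ^ (j : ℕ) * P ^ (J - j), by linear_combination h⟩
    rw [hlast, zero_mul, add_zero] at h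
    have hinit := ih (fun j => hG _) ((mul_eq_zero.1 h).resolve_left hP)
    funext j
    induction j using Fin.lastCases with
    | last => exact hlast
    | cast j => exact congrFun hinit j

theorem pow_three_add_mul_le {t q p : ℕ} (hq : q ^ 4 ≤ t) (htp : t ^ 4 ≤ p ^ 3)
    (hp : 2 ^ 16 ≤ p) : q ^ 3 + t * q ≤ p := by
  have h16 : (2 * t * q) ^ 16 ≤ p ^ 16 :=
    calc (2 * t * q) ^ 16 = 2 ^ 16 * t ^ 16 * (q ^ 4) ^ 4 := by ring
      _ ≤ 2 ^ 16 * (t ^ 4) ^ 4 * t ^ 4 := by rw [← pow_mul t 4 4]; gcongr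
      _ ≤ p * (p ^ 3) ^ 4 * p ^ 3 := by gcongr
      _ = p ^ 16 := by ring
  have h2tq := (Nat.pow_le_pow_iff_left (by norm_num)).1 h16
  rcases Nat.eq_zero_or_pos q with rfl | hq0
  · simp
  · have : q ^ 3 ≤ t := (Nat.pow_le_pow_right hq0 (by norm_num)).trans hq
    nlinarith

theorem le_of_two_mul_sq_mul_le {x q N : ℝ} (hq : 1 ≤ q) (hqx : q ≤ x) (hxq : x ≤ 2 * q)
    (h : 2 * q ^ 2 * N ≤ q ^ 3 + x ^ 4 * q + x ^ 4 * (2 * q + 12)) : N ≤ 16 * x ^ 3 := by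
  have hx : 1 ≤ x := hq.trans hqx
  have h₁ : q ^ 3 ≤ q ^ 2 * x ^ 3 := by
    have : q ≤ x ^ 3 := hqx.trans (le_self_pow₀ hx (by norm_num))
    nlinarith
  have h₂ : x ^ 4 * q ≤ 2 * q ^ 2 * x ^ 3 := by
    have : 0 ≤ q * x ^ 3 := by positivity
    nlinarith
  have h₃ : x ^ 4 ≤ 2 * q ^ 2 * x ^ 3 := by
    have : 0 ≤ x ^ 3 := by positivity
    nlinarith [mul_le_mul_of_nonneg_right hxq this,
      mul_le_mul_of_nonneg_right (show q ≤ q ^ 2 by nlinarith) this]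
  have hq2 : 0 < q ^ 2 := by positivity
  nlinarith

namespace Stepanov

variable {F : Type*} [Field F]

noncomputable def term (b : F) (t J j a i : ℕ) : F[X] :=
  X ^ (a + t * i) * (C b * X - 1) ^ (t * j) * (X - 1) ^ (t * (J - j))

noncomputable def auxPoly (b : F) (t J : ℕ) {A I : ℕ} (l : Fin (J + 1) × Fin A × Fin I → F) :
    F[X] :=
  ∑ v, C (l v) * term b t J v.1 v.2.1 v.2.2

noncomputable def lacunary (t : ℕ) {A I : ℕ} (c : Fin A × Fin I → F) : F[X] :=
  ∑ ai, C (c ai) * X ^ (ai.1 + t * ai.2 : ℕ)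

theorem coeff_lacunary {t A I : ℕ} (hA : A ≤ t) (c : Fin A × Fin I → F) (ai : Fin A × Fin I) :
    (lacunary t c).coeff (ai.1 + t * ai.2) = c ai := by
  have hinj : ∀ ai' : Fin A × Fin I, (ai.1 + t * ai.2 : ℕ) = ai'.1 + t * ai'.2 → ai' = ai := by
    intro ai' h
    have h₁ : (ai.1 : ℕ) < t := ai.1.2.trans_le hA
    have h₂ : (ai'.1 : ℕ) < t := ai'.1.2.trans_le hA
    have hmod := congrArg (· % t) h
    have hdiv := congrArg (· / t) h
    simp only [Nat.add_mul_mod_self_left, Nat.mod_eq_of_lt h₁, Nat.mod_eq_of_lt h₂,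
      Nat.add_mul_div_left _ _ (pos_of_gt h₁), Nat.div_eq_of_lt h₁, Nat.div_eq_of_lt h₂,
      zero_add] at hmod hdiv
    exact Prod.ext (Fin.ext hmod.symm) (Fin.ext hdiv.symm)
  simp only [lacunary, finsetSum_coeff, coeff_C_mul_X_pow]
  rw [sum_eq_single ai (fun ai' _ hne => if_neg fun h => hne (hinj ai' h)) (by simp), if_pos rfl]

theorem support_lacunary_subset (t : ℕ) {A I : ℕ} (c : Fin A × Fin I → F) :
    (lacunary t c).support ⊆ univ.image fun ai : Fin A × Fin I => (ai.1 + t * ai.2 : ℕ) := by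
  intro n hn
  rw [mem_support_iff, lacunary, finsetSum_coeff] at hn
  obtain ⟨ai, -, hai⟩ := exists_ne_zero_of_sum_ne_zero hn
  rw [coeff_C_mul_X_pow] at hai
  exact mem_image.2 ⟨ai, mem_univ _, (ite_ne_right_iff.1 hai).1.symm⟩

theorem lacunary_eq_zero_of_pow_dvd (p : ℕ) [CharP F p] {t A I : ℕ} (hAI : A * I ≤ t)
    (hp : A + t * I ≤ p) {c : Fin A × Fin I → F} (h : (X - 1) ^ t ∣ lacunary t c) :
    lacunary t c = 0 := by
  by_contra hne
  have hsupp := support_lacunary_subset t c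
  have hcard : #(lacunary t c).support ≤ A * I :=
    (card_le_card hsupp).trans (card_image_le.trans (by simp))
  have hdeg : (lacunary t c).natDegree < p := by
    obtain ⟨ai, -, hai⟩ := mem_image.1 (hsupp (natDegree_mem_support_of_nonzero hne))
    have := Nat.mul_le_mul_left t ai.2.2.le
    omega
  have hmult := rootMultiplicity_lt_card_support p hne hdeg one_ne_zero
  have := (le_rootMultiplicity_iff hne).2 (by rwa [C_1])
  omega

theorem auxPoly_eq_sum_lacunary (b : F) (t J : ℕ) {A I : ℕ}
    (l : Fin (J + 1) × Fin A × Fin I → F) :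
    auxPoly b t J l = ∑ j : Fin (J + 1),
      lacunary t (fun ai => l (j, ai)) * ((C b * X - 1) ^ t) ^ (j : ℕ) * ((X - 1) ^ t) ^ (J - j) :=
    by
  simp only [auxPoly, Fintype.sum_prod_type, lacunary, sum_mul, term, ← pow_mul]
  refine sum_congr rfl fun j _ => sum_congr rfl fun a _ => sum_congr rfl fun i _ => ?_
  ring

theorem auxPoly_ne_zero (p : ℕ) [CharP F p] {b : F} (hb : b ≠ 1) {t J A I : ℕ}
    (hAI : A * I ≤ t) (hp : A + t * I ≤ p) {l : Fin (J + 1) × Fin A × Fin I → F} (hl : l ≠ 0) :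
    auxPoly b t J l ≠ 0 := by
  obtain ⟨v, -⟩ := Function.ne_iff.1 hl
  have hA : A ≤ t := (Nat.le_mul_of_pos_right A (Fin.pos v.2.2)).trans hAI
  have hcop : IsCoprime ((X - 1 : F[X]) ^ t) ((C b * X - 1) ^ t) := by
    refine IsCoprime.pow ?_
    rw [← C_1, (irreducible_X_sub_C 1).coprime_iff_not_dvd, dvd_iff_isRoot]
    simpa [sub_eq_zero] using hb
  intro h0
  have hG := eq_zero_of_sum_mul_pow_eq_zero (pow_ne_zero _ (X_sub_C_ne_zero 1)) hcop J
    (G := fun j => lacunary t (fun ai => l (j, ai)))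
    (fun j => lacunary_eq_zero_of_pow_dvd p hAI hp)
    (by rw [← auxPoly_eq_sum_lacunary, h0])
  refine hl (funext fun v => ?_)
  simpa [coeff_lacunary hA] using congrArg (coeff · (v.2.1 + t * v.2.2)) (congrFun hG v.1)

theorem natDegree_auxPoly_le (b : F) (t J : ℕ) {A I : ℕ} (l : Fin (J + 1) × Fin A × Fin I → F) :
    (auxPoly b t J l).natDegree ≤ A + t * I + t * J := by
  refine natDegree_sum_le_of_forall_le _ _ fun v _ => (natDegree_C_mul_le _ _).trans ?_
  have hdeg : (term b t J v.1 v.2.1 v.2.2).natDegree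
      ≤ v.2.1 + t * v.2.2 + t * v.1 + t * (J - v.1) := by
    unfold term; compute_degree
  have := Nat.mul_le_mul_left t v.2.2.2.le
  have : t * v.1 + t * (J - v.1) = t * J := by rw [← mul_add]; congr 1; have := v.1.is_le; omega
  omega

/-- At a point `x₀` with `x₀ ^ t = 1` and `(b x₀ - 1) ^ t = (x₀ - 1) ^ t`, this polynomial, whose
degree does not involve `t`, computes the `k`-th Hasse derivative of `term b t J j a i` up to a
nonzero factor (`pow_mul_taylor_coeff_term`). -/
noncomputable def reducedDeriv (b : F) (t J j a i k : ℕ) : F[X] :=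
  ∑ x ∈ antidiagonal k, ∑ y ∈ antidiagonal x.1,
    C (((a + t * i).choose y.1 * (t * j).choose y.2 * (t * (J - j)).choose x.2 : ℕ) * b ^ y.2) *
      (X ^ (a + k - y.1) * (C b * X - 1) ^ (k - y.2) * (X - 1) ^ (k - x.2))

noncomputable def auxReducedDeriv (b : F) (t J : ℕ) {A I : ℕ}
    (l : Fin (J + 1) × Fin A × Fin I → F) (k : ℕ) : F[X] :=
  ∑ v, C (l v) * reducedDeriv b t J v.1 v.2.1 v.2.2 k

theorem pow_mul_taylor_coeff_term {b x₀ s : F} {t J : ℕ} (hx₀ : x₀ ^ t = 1)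
    (hbx₀ : (b * x₀ - 1) ^ t = s) (hx₀' : (x₀ - 1) ^ t = s) {j : ℕ} (hj : j ≤ J) (a i k : ℕ) :
    (x₀ * (b * x₀ - 1) * (x₀ - 1)) ^ k * (taylor x₀ (term b t J j a i)).coeff k
      = s ^ J * (reducedDeriv b t J j a i k).eval x₀ := by
  have htaylor : taylor x₀ (term b t J j a i) = (C 1 * X + C x₀) ^ (a + t * i)
      * (C b * X + C (b * x₀ - 1)) ^ (0 + t * j) * (C 1 * X + C (x₀ - 1)) ^ (0 + t * (J - j)) := by
    simp only [term, taylor_mul, taylor_pow, map_sub, map_mul, taylor_C, taylor_X, taylor_one,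
      C_1, one_mul, zero_add]
    ring
  rw [htaylor, coeff_mul, mul_sum, reducedDeriv, eval_finsetSum, mul_sum]
  refine sum_congr rfl fun x hx => ?_
  rw [coeff_mul, sum_mul, mul_sum, eval_finsetSum, mul_sum]
  refine sum_congr rfl fun y hy => ?_
  rw [HasAntidiagonal.mem_antidiagonal] at hx hy
  have h₁ := pow_mul_coeff_C_mul_X_add_C_pow 1 x₀ hx₀ a i (i := y.1) (k := k) (by omega)
  have h₂ := pow_mul_coeff_C_mul_X_add_C_pow b (b * x₀ - 1) hbx₀ 0 j (i := y.2) (k := k) (by omega)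
  have h₃ := pow_mul_coeff_C_mul_X_add_C_pow 1 (x₀ - 1) hx₀' 0 (J - j) (i := x.2) (k := k)
    (by omega)
  calc (x₀ * (b * x₀ - 1) * (x₀ - 1)) ^ k * (((C 1 * X + C x₀) ^ (a + t * i)).coeff y.1
        * ((C b * X + C (b * x₀ - 1)) ^ (0 + t * j)).coeff y.2
        * ((C 1 * X + C (x₀ - 1)) ^ (0 + t * (J - j))).coeff x.2)
      = (x₀ ^ k * ((C 1 * X + C x₀) ^ (a + t * i)).coeff y.1)
        * ((b * x₀ - 1) ^ k * ((C b * X + C (b * x₀ - 1)) ^ (0 + t * j)).coeff y.2)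
        * ((x₀ - 1) ^ k * ((C 1 * X + C (x₀ - 1)) ^ (0 + t * (J - j))).coeff x.2) := by
        rw [mul_pow, mul_pow]; ring
    _ = s ^ (j + (J - j)) * (((a + t * i).choose y.1 * (t * j).choose y.2
          * (t * (J - j)).choose x.2 : ℕ) * b ^ y.2
          * (x₀ ^ (a + k - y.1) * (b * x₀ - 1) ^ (k - y.2) * (x₀ - 1) ^ (k - x.2))) := by
        rw [h₁, h₂, h₃]; simp only [zero_add, one_pow]; push_cast; ring
    _ = _ := by
        rw [Nat.add_sub_cancel' hj]
        simp [eval_mul]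

theorem natDegree_reducedDeriv_le (b : F) (t J j a i k : ℕ) :
    (reducedDeriv b t J j a i k).natDegree ≤ a + 3 * k := by
  refine natDegree_sum_le_of_forall_le _ _ fun x _ => natDegree_sum_le_of_forall_le _ _ fun y _ =>
    (natDegree_C_mul_le _ _).trans ?_
  have : (X ^ (a + k - y.1) * (C b * X - 1) ^ (k - y.2) * (X - 1 : F[X]) ^ (k - x.2)).natDegree
      ≤ a + k - y.1 + (k - y.2) + (k - x.2) := by compute_degree
  omega

theorem exists_ne_zero_auxReducedDeriv_eq_zero (b : F) (t : ℕ) {J A I D : ℕ}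
    (hsys : D * (A + 3 * D) < (J + 1) * A * I) :
    ∃ l : Fin (J + 1) × Fin A × Fin I → F, l ≠ 0 ∧ ∀ k < D, auxReducedDeriv b t J l k = 0 := by
  set w : Fin (J + 1) × Fin A × Fin I → Fin D × Fin (A + 3 * D) → F :=
    fun v kn => (reducedDeriv b t J v.1 v.2.1 v.2.2 kn.1).coeff kn.2
  have hdep : ¬ LinearIndependent F w := fun h => by
    have := h.fintype_card_le_finrank
    simp only [Module.finrank_fintype_fun_eq_card, Fintype.card_prod, Fintype.card_fin] at this
    rw [← mul_assoc] at this
    omega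
  obtain ⟨l, hl, v, hv⟩ := Fintype.not_linearIndependent_iff.1 hdep
  refine ⟨l, fun h => hv (by simp [h]), fun k hk => ext fun n => ?_⟩
  rw [auxReducedDeriv, coeff_zero, finsetSum_coeff]
  simp_rw [coeff_C_mul]
  rcases lt_or_ge n (A + 3 * D) with hn | hn
  · simpa only [Finset.sum_apply, Pi.smul_apply, smul_eq_mul, Pi.zero_apply, w]
      using congrFun hl (⟨k, hk⟩, ⟨n, hn⟩)
  · refine sum_eq_zero fun v _ => ?_
    rw [coeff_eq_zero_of_natDegree_lt, mul_zero]
    have := natDegree_reducedDeriv_le b t J v.1 v.2.1 v.2.2 k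
    have := v.2.1.2
    omega

theorem le_rootMultiplicity_auxPoly {b : F} {t J A I D : ℕ} (ht : 0 < t)
    {l : Fin (J + 1) × Fin A × Fin I → F} (hl : auxPoly b t J l ≠ 0)
    (hR : ∀ k < D, auxReducedDeriv b t J l k = 0) {x₀ : F}
    (hx₀ : x₀ ^ t = 1) (hx₁ : x₀ ≠ 1) (hbx₀ : (b * x₀ - 1) ^ t = (x₀ - 1) ^ t) :
    D ≤ (auxPoly b t J l).rootMultiplicity x₀ := by
  rw [rootMultiplicity_eq_natTrailingDegree, ← taylor_apply]
  refine le_natTrailingDegree (by rwa [ne_eq, taylor_eq_zero]) fun k hk => ?_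
  have hx₁' : x₀ - 1 ≠ 0 := sub_ne_zero.2 hx₁
  have hu : x₀ * (b * x₀ - 1) * (x₀ - 1) ≠ 0 := by
    refine mul_ne_zero (mul_ne_zero ?_ ?_) hx₁'
    · rintro rfl; simp [ht.ne'] at hx₀
    · intro h; rw [h, zero_pow ht.ne'] at hbx₀; exact pow_ne_zero t hx₁' hbx₀.symm
  have key : (x₀ * (b * x₀ - 1) * (x₀ - 1)) ^ k * (taylor x₀ (auxPoly b t J l)).coeff k
      = ((x₀ - 1) ^ t) ^ J * (auxReducedDeriv b t J l k).eval x₀ := by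
    simp only [auxPoly, auxReducedDeriv, map_sum, taylor_mul, taylor_C, finsetSum_coeff,
      coeff_C_mul, mul_sum, eval_finsetSum, eval_mul, eval_C]
    refine sum_congr rfl fun v _ => ?_
    linear_combination l v * pow_mul_taylor_coeff_term hx₀ hbx₀ rfl v.1.is_le _ _ k
  rw [hR k hk, eval_zero, mul_zero] at key
  exact (mul_eq_zero.1 key).resolve_left (pow_ne_zero _ hu)

theorem card_mul_le (p : ℕ) [CharP F p] {b : F} (hb : b ≠ 1) {t A I J D : ℕ} (hAI : A * I ≤ t)
    (hp : A + t * I ≤ p) (hsys : D * (A + 3 * D) < (J + 1) * A * I) {S : Finset F}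
    (hS : ∀ x ∈ S, x ^ t = 1 ∧ x ≠ 1 ∧ (b * x - 1) ^ t = (x - 1) ^ t) :
    D * #S ≤ A + t * I + t * J := by
  obtain ⟨l, hl, hR⟩ := exists_ne_zero_auxReducedDeriv_eq_zero b t hsys
  have hΨ := auxPoly_ne_zero p hb hAI hp hl
  have ht : 0 < t := by
    have : 0 < A * I := by nlinarith
    omega
  calc D * #S = ∑ _ ∈ S, D := by rw [sum_const, smul_eq_mul, mul_comm]
    _ ≤ ∑ x ∈ S, (auxPoly b t J l).rootMultiplicity x := sum_le_sum fun x hx =>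
        le_rootMultiplicity_auxPoly ht hΨ hR (hS x hx).1 (hS x hx).2.1 (hS x hx).2.2
    _ ≤ (auxPoly b t J l).natDegree := sum_rootMultiplicity_le_natDegree _ _
    _ ≤ A + t * I + t * J := natDegree_auxPoly_le b t J l

theorem card_le_rpow (p : ℕ) [CharP F p] (hp : 2 ^ 16 ≤ p) {b : F} (hb : b ≠ 1) {t : ℕ}
    (ht : 0 < t) (htp : (t : ℝ) ≤ (p : ℝ) ^ ((3 : ℝ) / 4)) {S : Finset F}
    (hS : ∀ x ∈ S, x ^ t = 1 ∧ x ≠ 1 ∧ (b * x - 1) ^ t = (x - 1) ^ t) :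
    (#S : ℝ) ≤ 16 * (t : ℝ) ^ ((3 : ℝ) / 4) := by
  set x := (t : ℝ) ^ ((1 : ℝ) / 4)
  have hpow (n : ℕ) : x ^ n = (t : ℝ) ^ ((n : ℝ) / 4) := by
    rw [← Real.rpow_natCast, ← Real.rpow_mul (by positivity)]; ring_nf
  have hx4 : x ^ 4 = t := by rw [hpow]; norm_num
  have hx1 : 1 ≤ x := Real.one_le_rpow (by exact_mod_cast ht) (by norm_num)
  set q := ⌊x⌋₊
  have hq1 : 1 ≤ q := Nat.le_floor (by simpa using hx1)
  have hqx : (q : ℝ) ≤ x := Nat.floor_le (by positivity)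
  have hxq : x ≤ 2 * q := (Nat.lt_floor_add_one x).le.trans (by
    have : (1 : ℝ) ≤ q := by exact_mod_cast hq1
    linarith)
  have hqt : q ^ 4 ≤ t := by exact_mod_cast (pow_le_pow_left₀ (by positivity) hqx 4).trans hx4.le
  have htp' : t ^ 4 ≤ p ^ 3 := by
    have h := pow_le_pow_left₀ (by positivity) htp 4
    rw [← Real.rpow_natCast ((p : ℝ) ^ _) 4, ← Real.rpow_mul (by positivity)] at h
    norm_num at h
    exact_mod_cast h
  -- With `A = q³`, `I = q`, `J = 2q + 12`, `D = 2q²` there are `2q⁵ + 13q⁴` unknowns against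
  -- `2q⁵ + 12q⁴` equations.
  have hstep := card_mul_le p hb (A := q ^ 3) (I := q) (J := 2 * q + 12) (D := 2 * q ^ 2)
    (by ring_nf; exact hqt) (pow_three_add_mul_le hqt htp' hp)
    (by ring_nf; nlinarith [pow_pos (by omega : 0 < q) 4]) hS
  have hstepR : 2 * (q : ℝ) ^ 2 * #S ≤ q ^ 3 + x ^ 4 * q + x ^ 4 * (2 * q + 12) := by
    rw [hx4]; exact_mod_cast hstep
  have hx3 : (t : ℝ) ^ ((3 : ℝ) / 4) = x ^ 3 := by rw [hpow]; norm_num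
  rw [hx3]
  exact le_of_two_mul_sq_mul_le (by exact_mod_cast hq1) hqx hxq hstepR

end Stepanov

section MarkoffPairs

variable {F : Type*} [Field F]

def markoffPairs (b : F) (t : ℕ) : Set (F × F) :=
  {wr | wr.1 ≠ 0 ∧ wr.2 ≠ 0 ∧ wr.1 + wr.1⁻¹ = wr.2 + b * wr.2⁻¹ ∧ wr.1 ^ t = 1 ∧ wr.2 ^ t = 1}

theorem mul_mul_div_sub_one_of_add_inv_eq {b w ρ : F} (hw : w ≠ 0) (hρ : ρ ≠ 0)
    (h : w + w⁻¹ = ρ + b * ρ⁻¹) : w * ρ * (w / ρ - 1) = b * (w / ρ) - 1 := by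
  field_simp at h ⊢
  linear_combination h

theorem div_ne_one_of_add_inv_eq {b w ρ : F} (hb : b ≠ 1) (hw : w ≠ 0) (hρ : ρ ≠ 0)
    (h : w + w⁻¹ = ρ + b * ρ⁻¹) : w / ρ ≠ 1 := fun h1 => hb <| by
  have key := mul_mul_div_sub_one_of_add_inv_eq hw hρ h
  rw [h1] at key
  linear_combination -key

theorem Prod.eq_or_eq_neg_of_div_eq_of_mul_eq {w ρ w' ρ' : F} (hw : w ≠ 0) (hρ : ρ ≠ 0)
    (hρ' : ρ' ≠ 0) (hdiv : w / ρ = w' / ρ') (hmul : w * ρ = w' * ρ') :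
    (w', ρ') = (w, ρ) ∨ (w', ρ') = -(w, ρ) := by
  have hsq : w' ^ 2 = w ^ 2 :=
    calc w' ^ 2 = w' / ρ' * (w' * ρ') := by field_simp
      _ = w / ρ * (w * ρ) := by rw [hdiv, hmul]
      _ = w ^ 2 := by field_simp
  rcases sq_eq_sq_iff_eq_or_eq_neg.1 hsq with rfl | rfl
  · left; simp [mul_left_cancel₀ hw hmul]
  · right
    simp [mul_left_cancel₀ hw (show w * ρ' = w * -ρ by linear_combination hmul)]

theorem exists_card_ge_ncard_markoffPairs [Finite F] {b : F} (hb : b ≠ 1) (t : ℕ) :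
    ∃ S : Finset F, (∀ η ∈ S, η ^ t = 1 ∧ η ≠ 1 ∧ (b * η - 1) ^ t = (η - 1) ^ t) ∧
      (markoffPairs b t).ncard ≤ 2 * #S := by
  classical
  set P := (Set.toFinite (markoffPairs b t)).toFinset
  have hP : ∀ wr ∈ P, _ := fun wr hwr => (Set.Finite.mem_toFinset _).1 hwr
  refine ⟨P.image fun wr => wr.1 / wr.2, ?_, ?_⟩
  · simp only [mem_image]
    rintro _ ⟨⟨w, ρ⟩, hwr, rfl⟩
    obtain ⟨hw, hρ, h, hwt, hρt⟩ := hP _ hwr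
    refine ⟨by rw [div_pow, hwt, hρt, div_one], div_ne_one_of_add_inv_eq hb hw hρ h, ?_⟩
    rw [← mul_mul_div_sub_one_of_add_inv_eq hw hρ h, mul_pow, mul_pow, hwt, hρt, one_mul, one_mul]
  · rw [Set.ncard_eq_toFinset_card _ (Set.toFinite _)]
    refine card_le_mul_card_image _ 2 fun η hη => ?_
    obtain ⟨wr₀, hwr₀, rfl⟩ := mem_image.1 hη
    refine (card_le_card fun wr hwr => ?_).trans (card_le_two (a := wr₀) (b := -wr₀))
    rw [mem_filter] at hwr
    obtain ⟨hw, hρ, h, -⟩ := hP _ hwr.1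
    obtain ⟨hw₀, hρ₀, h₀, -⟩ := hP _ hwr₀
    have hdiv : wr₀.1 / wr₀.2 = wr.1 / wr.2 := hwr.2.symm
    have hmul : wr₀.1 * wr₀.2 = wr.1 * wr.2 := by
      refine mul_right_cancel₀ (sub_ne_zero.2 (div_ne_one_of_add_inv_eq hb hw hρ h)) ?_
      rw [mul_mul_div_sub_one_of_add_inv_eq hw hρ h, ← hdiv, mul_mul_div_sub_one_of_add_inv_eq hw₀ hρ₀ h₀]
    simpa using Prod.eq_or_eq_neg_of_div_eq_of_mul_eq hw₀ hρ₀ hρ hdiv hmul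

end MarkoffPairs

theorem markoff_trace_equation_roots_of_unity_bound :
    ∃ C : ℝ, 0 < C ∧ ∃ P₀ : ℕ,
      ∀ (p : ℕ) [Fact p.Prime], P₀ ≤ p →
        ∀ t : ℕ, t ∣ p - 1 → (t : ℝ) ≤ (p : ℝ) ^ ((3 : ℝ) / 4) →
          ∀ b : ZMod p, b ≠ 1 →
            ({wr : ZMod p × ZMod p | wr.1 ≠ 0 ∧ wr.2 ≠ 0 ∧
                wr.1 + wr.1⁻¹ = wr.2 + b * wr.2⁻¹ ∧
                wr.1 ^ t = 1 ∧ wr.2 ^ t = 1}.ncard : ℝ) ≤ C * (t : ℝ) ^ ((3 : ℝ) / 4) := by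
  refine ⟨32, by norm_num, 2 ^ 16, fun p _ hp t ht htp b hb => ?_⟩
  have ht0 : 0 < t := Nat.pos_of_dvd_of_pos ht (by have := (Fact.out : p.Prime).two_le; omega)
  obtain ⟨S, hS, hcard⟩ := exists_card_ge_ncard_markoffPairs hb t
  calc ((markoffPairs b t).ncard : ℝ) ≤ 2 * #S := by exact_mod_cast hcard
    _ ≤ 2 * (16 * (t : ℝ) ^ ((3 : ℝ) / 4)) := by
      gcongr; exact Stepanov.card_le_rpow p hp hb ht0 htp hS
    _ = 32 * (t : ℝ) ^ ((3 : ℝ) / 4) := by ring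
end
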